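/- arXiv:2403.06731 — 8 statements merged into one kernel-verified Lean document; each statement's English description precedes it below -/
import Mathlib

section
/- Fix an integer m ≥ 1. Let w_m^x(z) = Σ_{i=1}^m α_{x,i} z^{i-1}, where α_x ∈ ℝ^m solves H_m α_x = (1, x, …, x^{m-1})ᵀ for the m×m Hilbert matrix H_m = (1/(i+j-1))_{i,j=1}^m. Then at the boundary points the squared L²([0,1])-norm equals m² exactly: ∫_0^1 w_m^1(z)² dz = m² and ∫_0^1 w_m^0(z)² dz = m². Equivalently, the sum of all entries of H_m^{-1} equals m², and the (1,1) entry of H_m^{-1} equals m². -/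
/-!
The vector `α` solving `H_m α = (xⁱ)ᵢ` is the coefficient vector of the polynomial `w` of degree
`< m` with `∫₀¹ zⁱ w(z) dz = xⁱ` for `i < m`, so `∫₀¹ w² = Σ αᵢ ∫₀¹ zⁱ w = Σ αᵢ xⁱ = w(x)`.
At the endpoints `w` has a Rodrigues-type formula: with `m = n + 1`,
`w¹ = (1/n!) Dⁿ⁺¹[zⁿ⁺¹(z-1)ⁿ]` and `w⁰ = ((-1)ⁿ/n!) Dⁿ⁺¹[zⁿ(z-1)ⁿ⁺¹]`, since after integrating
`zⁱ Dⁿ⁺¹f` by parts the zeros of `f` at `0` and `1` kill every boundary term but the first.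
Reading derivatives off Taylor coefficients gives `w¹(1) = w⁰(0) = (n+1)²`. Finally `H_m`, the
Gram matrix of the monomials in `L²[0,1]`, is positive definite, which makes `α` unique and gives
`H_m⁻¹ (1,…,1) = α¹`, `H_m⁻¹ e₀ = α⁰`.
-/

open MeasureTheory

/-- The `m × m` Hilbert matrix `H_m = (1/(i+j-1))_{i,j=1}^m` (0-indexed here). -/
noncomputable def hilbertMatrix (m : ℕ) : Matrix (Fin m) (Fin m) ℝ :=
  fun i j => 1 / ((i.1 : ℝ) + (j.1 : ℝ) + 1)

open Polynomial Nat Matrix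

namespace Polynomial

theorem eval_iterate_derivative_eq_factorial_mul_coeff_taylor {R : Type*} [CommSemiring R]
    (f : R[X]) (r : R) (k : ℕ) :
    (derivative^[k] f).eval r = k ! * (taylor r f).coeff k := by
  rw [taylor_coeff, ← factorial_smul_hasseDeriv, LinearMap.smul_apply, eval_smul, nsmul_eq_mul]

theorem eval_iterate_derivative_X_sub_C_pow_mul {R : Type*} [CommRing R] (r : R) (a k : ℕ)
    (g : R[X]) : (derivative^[k] ((X - C r) ^ a * g)).eval r =
      k ! * if a ≤ k then (taylor r g).coeff (k - a) else 0 := by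
  rw [eval_iterate_derivative_eq_factorial_mul_coeff_taylor, taylor_mul, taylor_pow]
  simp [taylor_X, taylor_C, coeff_X_pow_mul']

theorem eval_zero_iterate_derivative_X_pow_mul_X_sub_one_pow (a b k : ℕ) :
    (derivative^[k] ((X : ℝ[X]) ^ a * (X - 1) ^ b)).eval 0 =
      k ! * if a ≤ k then (-1 : ℝ) ^ (b - (k - a)) * b.choose (k - a) else 0 := by
  have h := eval_iterate_derivative_X_sub_C_pow_mul (0 : ℝ) a k ((X - 1) ^ b)
  rw [C_0, sub_zero, taylor_zero] at h
  rw [h, show (X - 1 : ℝ[X]) = X + C (-1) by simp [sub_eq_add_neg], coeff_X_add_C_pow]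

theorem eval_one_iterate_derivative_X_pow_mul_X_sub_one_pow (a b k : ℕ) :
    (derivative^[k] ((X : ℝ[X]) ^ a * (X - 1) ^ b)).eval 1 =
      k ! * if b ≤ k then (a.choose (k - b) : ℝ) else 0 := by
  have h := eval_iterate_derivative_X_sub_C_pow_mul (1 : ℝ) b k (X ^ a)
  rw [C_1, mul_comm, taylor_X_pow, coeff_X_add_C_pow, one_pow, one_mul] at h
  exact h

theorem natDegree_X_pow_mul_X_sub_one_pow_le (a b : ℕ) :
    ((X : ℝ[X]) ^ a * (X - 1) ^ b).natDegree ≤ a + b := by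
  refine natDegree_mul_le_of_le (natDegree_X_pow_le a) ?_
  simpa using natDegree_pow_le_of_le b (natDegree_X_sub_C_le (1 : ℝ))

theorem natDegree_iterate_derivative_X_pow_mul_X_sub_one_pow_le (a b n : ℕ) :
    (derivative^[n + 1] ((X : ℝ[X]) ^ a * (X - 1) ^ b)).natDegree ≤ a + b - (n + 1) :=
  (natDegree_iterate_derivative _ _).trans
    (Nat.sub_le_sub_right (natDegree_X_pow_mul_X_sub_one_pow_le a b) _)

theorem mem_degreeLT_of_natDegree_le {R : Type*} [Semiring R] {p : R[X]} {n : ℕ}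
    (hp : p.natDegree ≤ n) : p ∈ degreeLT R (n + 1) := by
  rw [degreeLT_succ_eq_degreeLE, mem_degreeLE]
  exact natDegree_le_iff_degree_le.mp hp

end Polynomial

theorem Fin.sum_mul_zero_pow {R : Type*} [Semiring R] {n : ℕ} (u : Fin (n + 1) → R) :
    ∑ i, u i * 0 ^ (i : ℕ) = u 0 := by
  simp [Fin.sum_univ_succ]

theorem integral_eval_mul_eval_derivative (p q : ℝ[X]) (a b : ℝ) :
    ∫ x in a..b, p.eval x * (derivative q).eval x =
      p.eval b * q.eval b - p.eval a * q.eval a - ∫ x in a..b, (derivative p).eval x * q.eval x :=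
  intervalIntegral.integral_mul_deriv_eq_deriv_mul (fun x _ => p.hasDerivAt x)
    (fun x _ => q.hasDerivAt x) ((derivative p).continuous.intervalIntegrable _ _)
    ((derivative q).continuous.intervalIntegrable _ _)

theorem integral_pow_mul_eval_derivative (q : ℝ[X]) (i : ℕ) :
    ∫ x in (0 : ℝ)..1, x ^ i * (derivative q).eval x =
      q.eval 1 - 0 ^ i * q.eval 0 - i * ∫ x in (0 : ℝ)..1, x ^ (i - 1) * q.eval x := by
  simpa [derivative_X_pow, mul_assoc, intervalIntegral.integral_const_mul]
    using integral_eval_mul_eval_derivative (X ^ i) q 0 1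

theorem integral_pow_mul_eval_iterate_derivative_succ {n : ℕ} {f : ℝ[X]}
    (h₀ : ∀ k < n, (derivative^[k] f).eval 0 = 0) (h₁ : ∀ k < n, (derivative^[k] f).eval 1 = 0)
    {i : ℕ} (hi : i ≤ n) :
    ∫ x in (0 : ℝ)..1, x ^ i * (derivative^[n + 1] f).eval x =
      (derivative^[n] f).eval 1 - 0 ^ i * (derivative^[n] f).eval 0 := by
  induction n generalizing i with
  | zero => simpa [Nat.le_zero.mp hi] using integral_pow_mul_eval_derivative f 0
  | succ n ih =>
    rw [Function.iterate_succ_apply', integral_pow_mul_eval_derivative]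
    rcases i with _ | i
    · simp
    · rw [Nat.add_sub_cancel, ih (fun k hk => h₀ k (by omega)) (fun k hk => h₁ k (by omega))
        (by omega), h₀ n n.lt_succ_self, h₁ n n.lt_succ_self]
      simp

/-- The minimal moment function `w_{n+1}^1`. -/
noncomputable def momentPolyOne (n : ℕ) : ℝ[X] :=
  C (n ! : ℝ)⁻¹ * derivative^[n + 1] (X ^ (n + 1) * (X - 1) ^ n)

/-- The minimal moment function `w_{n+1}^0`. -/
noncomputable def momentPolyZero (n : ℕ) : ℝ[X] :=
  C ((-1) ^ n * (n ! : ℝ)⁻¹) * derivative^[n + 1] (X ^ n * (X - 1) ^ (n + 1))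

theorem natDegree_momentPolyOne_le (n : ℕ) : (momentPolyOne n).natDegree ≤ n :=
  (natDegree_C_mul_le _ _).trans <|
    (natDegree_iterate_derivative_X_pow_mul_X_sub_one_pow_le _ _ _).trans (by omega)

theorem natDegree_momentPolyZero_le (n : ℕ) : (momentPolyZero n).natDegree ≤ n :=
  (natDegree_C_mul_le _ _).trans <|
    (natDegree_iterate_derivative_X_pow_mul_X_sub_one_pow_le _ _ _).trans (by omega)

theorem integral_pow_mul_eval_momentPolyOne {n i : ℕ} (hi : i ≤ n) :
    ∫ x in (0 : ℝ)..1, x ^ i * (momentPolyOne n).eval x = 1 := by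
  simp only [momentPolyOne, eval_mul, eval_C, mul_left_comm _ (n ! : ℝ)⁻¹,
    intervalIntegral.integral_const_mul]
  rw [integral_pow_mul_eval_iterate_derivative_succ _ _ hi,
    eval_zero_iterate_derivative_X_pow_mul_X_sub_one_pow,
    eval_one_iterate_derivative_X_pow_mul_X_sub_one_pow]
  · simp [n.factorial_ne_zero]
  all_goals intro k hk
  · rw [eval_zero_iterate_derivative_X_pow_mul_X_sub_one_pow, if_neg (by omega), mul_zero]
  · rw [eval_one_iterate_derivative_X_pow_mul_X_sub_one_pow, if_neg (by omega), mul_zero]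

theorem integral_pow_mul_eval_momentPolyZero {n i : ℕ} (hi : i ≤ n) :
    ∫ x in (0 : ℝ)..1, x ^ i * (momentPolyZero n).eval x = 0 ^ i := by
  simp only [momentPolyZero, eval_mul, eval_C, mul_left_comm _ ((-1) ^ n * (n ! : ℝ)⁻¹),
    intervalIntegral.integral_const_mul]
  rw [integral_pow_mul_eval_iterate_derivative_succ _ _ hi,
    eval_zero_iterate_derivative_X_pow_mul_X_sub_one_pow,
    eval_one_iterate_derivative_X_pow_mul_X_sub_one_pow]
  · simp only [if_neg n.lt_succ_self.not_ge, if_pos le_rfl, Nat.sub_self, Nat.choose_zero_right]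
    field_simp
    rw [Nat.sub_zero, pow_succ]
    ring_nf
    simp
  all_goals intro k hk
  · rw [eval_zero_iterate_derivative_X_pow_mul_X_sub_one_pow, if_neg (by omega), mul_zero]
  · rw [eval_one_iterate_derivative_X_pow_mul_X_sub_one_pow, if_neg (by omega), mul_zero]

theorem eval_one_momentPolyOne (n : ℕ) : (momentPolyOne n).eval 1 = ((n : ℝ) + 1) ^ 2 := by
  rw [momentPolyOne, eval_mul, eval_C, eval_one_iterate_derivative_X_pow_mul_X_sub_one_pow,
    if_pos n.le_succ, Nat.add_sub_cancel_left, Nat.choose_one_right, Nat.factorial_succ]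
  field_simp
  push_cast
  ring

theorem eval_zero_momentPolyZero (n : ℕ) : (momentPolyZero n).eval 0 = ((n : ℝ) + 1) ^ 2 := by
  rw [momentPolyZero, eval_mul, eval_C, eval_zero_iterate_derivative_X_pow_mul_X_sub_one_pow,
    if_pos n.le_succ, Nat.add_sub_cancel_left, Nat.choose_one_right, Nat.factorial_succ,
    Nat.add_sub_cancel]
  field_simp
  push_cast
  ring_nf
  simp

theorem integral_eval_sq_pos {p : ℝ[X]} (hp : p ≠ 0) : 0 < ∫ x in (0 : ℝ)..1, p.eval x ^ 2 := by
  obtain ⟨c, hc, hpc⟩ : ∃ c ∈ Set.Icc (0 : ℝ) 1, p.eval c ≠ 0 := by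
    by_contra! h
    exact hp (p.eq_zero_of_infinite_isRoot ((Set.Icc_infinite zero_lt_one).mono h))
  exact intervalIntegral.integral_pos zero_lt_one (by fun_prop) (fun x _ => sq_nonneg _)
    ⟨c, hc, by positivity⟩

theorem integral_pow_mul_sum_eq_hilbertMatrix_mulVec {m : ℕ} (v : Fin m → ℝ) (i : Fin m) :
    ∫ x in (0 : ℝ)..1, x ^ (i : ℕ) * ∑ j, v j * x ^ (j : ℕ) = (hilbertMatrix m *ᵥ v) i := by
  simp only [Finset.mul_sum, mulVec, dotProduct, hilbertMatrix]
  rw [intervalIntegral.integral_finsetSum fun j _ =>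
    (by fun_prop : Continuous _).intervalIntegrable _ _]
  refine Finset.sum_congr rfl fun j _ => ?_
  simp only [mul_left_comm _ (v j), ← pow_add, intervalIntegral.integral_const_mul, integral_pow]
  push_cast
  ring

theorem integral_sq_sum_eq_dotProduct_hilbertMatrix_mulVec {m : ℕ} (v : Fin m → ℝ) :
    ∫ x in (0 : ℝ)..1, (∑ i, v i * x ^ (i : ℕ)) ^ 2 = v ⬝ᵥ (hilbertMatrix m *ᵥ v) := by
  simp only [sq, Finset.sum_mul, mul_assoc]
  rw [intervalIntegral.integral_finsetSum fun i _ =>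
    (by fun_prop : Continuous _).intervalIntegrable _ _]
  simp only [intervalIntegral.integral_const_mul, integral_pow_mul_sum_eq_hilbertMatrix_mulVec]
  rfl

theorem hilbertMatrix_mulVec_degreeLTEquiv {m : ℕ} {p : ℝ[X]} (hp : p ∈ degreeLT ℝ m) :
    hilbertMatrix m *ᵥ degreeLTEquiv ℝ m ⟨p, hp⟩ =
      fun i : Fin m => ∫ x in (0 : ℝ)..1, x ^ (i : ℕ) * p.eval x := by
  funext i
  simp only [eval_eq_sum_degreeLTEquiv hp]
  exact (integral_pow_mul_sum_eq_hilbertMatrix_mulVec _ i).symm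

theorem hilbertMatrix_posDef (m : ℕ) : (hilbertMatrix m).PosDef := by
  refine .of_dotProduct_mulVec_pos ?_ fun v hv => ?_
  · ext i j
    simp [hilbertMatrix, add_comm]
  · set p := (degreeLTEquiv ℝ m).symm v
    have hv' : v = degreeLTEquiv ℝ m ⟨p, p.2⟩ := ((degreeLTEquiv ℝ m).apply_symm_apply v).symm
    have hp : (p : ℝ[X]) ≠ 0 := fun h => hv (by
      rw [hv', show (⟨p, p.2⟩ : degreeLT ℝ m) = 0 from Subtype.ext h, map_zero])
    rw [star_trivial, ← integral_sq_sum_eq_dotProduct_hilbertMatrix_mulVec]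
    have heval (x : ℝ) : (p : ℝ[X]).eval x = ∑ i, v i * x ^ (i : ℕ) := by
      rw [eval_eq_sum_degreeLTEquiv p.2, ← hv']
    simpa only [heval] using integral_eval_sq_pos hp

theorem eq_degreeLTEquiv_of_hilbertMatrix_mulVec_eq {m : ℕ} {p : ℝ[X]} (hp : p ∈ degreeLT ℝ m)
    {x₀ : ℝ} (hmom : ∀ i < m, ∫ x in (0 : ℝ)..1, x ^ i * p.eval x = x₀ ^ i) {α : Fin m → ℝ}
    (hα : hilbertMatrix m *ᵥ α = fun i : Fin m => x₀ ^ (i : ℕ)) :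
    α = degreeLTEquiv ℝ m ⟨p, hp⟩ := by
  refine mulVec_injective_iff_isUnit.2 (hilbertMatrix_posDef m).isUnit ?_
  rw [hα, hilbertMatrix_mulVec_degreeLTEquiv]
  exact funext fun i => (hmom i i.2).symm

theorem setIntegral_sq_eq_sum_of_hilbertMatrix_mulVec_eq {m : ℕ} {α : Fin m → ℝ} {x₀ : ℝ}
    (hα : hilbertMatrix m *ᵥ α = fun i : Fin m => x₀ ^ (i : ℕ)) :
    ∫ z in Set.Icc (0 : ℝ) 1, (∑ i, α i * z ^ (i : ℕ)) ^ 2 = ∑ i, α i * x₀ ^ (i : ℕ) := by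
  rw [integral_Icc_eq_integral_Ioc, ← intervalIntegral.integral_of_le zero_le_one,
    integral_sq_sum_eq_dotProduct_hilbertMatrix_mulVec, hα]
  rfl

/-- At the boundary points `x = 1` and `x = 0`, the squared `L²([0,1])`-norm of the
minimal moment function `w_m^x` equals `m²` exactly; equivalently the sum of all
entries of `H_m⁻¹` equals `m²` and the `(1,1)` entry of `H_m⁻¹` equals `m²`. -/
theorem minimal_moment_function_boundary_norm
    (m : ℕ) (hm : 1 ≤ m)
    (α1 α0 : Fin m → ℝ)
    (hα1 : (hilbertMatrix m).mulVec α1 = fun i => (1 : ℝ) ^ (i.1))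
    (hα0 : (hilbertMatrix m).mulVec α0 = fun i => (0 : ℝ) ^ (i.1)) :
    (∫ z in Set.Icc (0 : ℝ) 1, (∑ i : Fin m, α1 i * z ^ (i.1)) ^ 2) = (m : ℝ) ^ 2 ∧
    (∫ z in Set.Icc (0 : ℝ) 1, (∑ i : Fin m, α0 i * z ^ (i.1)) ^ 2) = (m : ℝ) ^ 2 ∧
    (∑ i : Fin m, ∑ j : Fin m, (hilbertMatrix m)⁻¹ i j) = (m : ℝ) ^ 2 ∧
    (hilbertMatrix m)⁻¹ ⟨0, hm⟩ ⟨0, hm⟩ = (m : ℝ) ^ 2 := by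
  obtain ⟨n, rfl⟩ : ∃ n, m = n + 1 := ⟨m - 1, by omega⟩
  have hdeg₁ := mem_degreeLT_of_natDegree_le (natDegree_momentPolyOne_le n)
  have hdeg₀ := mem_degreeLT_of_natDegree_le (natDegree_momentPolyZero_le n)
  have h₁ := eq_degreeLTEquiv_of_hilbertMatrix_mulVec_eq hdeg₁
    (fun i hi => by rw [one_pow, integral_pow_mul_eval_momentPolyOne (Nat.lt_succ_iff.mp hi)]) hα1
  have h₀ := eq_degreeLTEquiv_of_hilbertMatrix_mulVec_eq hdeg₀
    (fun i hi => integral_pow_mul_eval_momentPolyZero (Nat.lt_succ_iff.mp hi)) hα0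
  have hw₁ : ∑ i, α1 i * 1 ^ (i : ℕ) = ((n + 1 : ℕ) : ℝ) ^ 2 := by
    rw [h₁, ← eval_eq_sum_degreeLTEquiv, eval_one_momentPolyOne, Nat.cast_succ]
  have hw₀ : ∑ i, α0 i * 0 ^ (i : ℕ) = ((n + 1 : ℕ) : ℝ) ^ 2 := by
    rw [h₀, ← eval_eq_sum_degreeLTEquiv, eval_zero_momentPolyZero, Nat.cast_succ]
  have : Invertible (hilbertMatrix (n + 1)) := (hilbertMatrix_posDef (n + 1)).isUnit.invertible
  have hinv₁ := congrFun (inv_mulVec_eq_vec hα1.symm)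
  have hinv₀ := congrFun (inv_mulVec_eq_vec hα0.symm) 0
  refine ⟨?_, ?_, ?_, ?_⟩
  · rw [setIntegral_sq_eq_sum_of_hilbertMatrix_mulVec_eq hα1, hw₁]
  · rw [setIntegral_sq_eq_sum_of_hilbertMatrix_mulVec_eq hα0, hw₀]
  · simpa only [← hinv₁, mulVec, dotProduct, one_pow, mul_one] using hw₁
  · rw [← hw₀, Fin.sum_mul_zero_pow, ← hinv₀, mulVec, dotProduct, Fin.sum_mul_zero_pow]
    rfl
end

section
/- Fix an integer m ≥ 1. For every x ∈ [0,1], the minimal moment function w_m^x satisfies the uniform norm bound ∫_0^1 w_m^x(z)² dz ≤ m². -/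
open MeasureTheory

/-!
The squared norm of `w = w_m^x` is `αᵀ H_m α = αᵀ (1, x, …, x^{m-1}) = w(x)`, so it suffices to
prove `p(x)² ≤ m² ∫₀¹ p²` for every polynomial `p` of degree `< m` and `x ∈ [0,1]`: then
`w(x)² ≤ m² w(x)`. At `x = 1` this is Cauchy–Schwarz against the reproducing kernel
`K = ∑_{k<m} (2k+1) L_k` of evaluation at `1` (`L_k` the Legendre polynomials on `[0,1]`, normalised
by `L_k(1) = 1`), whose squared norm is `K(1) = ∑_{k<m} (2k+1) = m²`. Rescaling `[0,x]` and `[x,1]`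
to `[0,1]` gives `x p(x)² ≤ m² ∫₀ˣ p²` and `(1-x) p(x)² ≤ m² ∫ₓ¹ p²`, whose sum is the claim.
-/

open Polynomial intervalIntegral
open scoped Nat Matrix

namespace Polynomial

theorem eval_iterate_derivative_eq_zero_of_pow_dvd {R : Type*} [CommSemiring R] {p q : R[X]} {a : R}
    {n j : ℕ} (hdvd : q ^ n ∣ p) (hq : q.eval a = 0) (hj : j < n) :
    (derivative^[j] p).eval a = 0 := by
  obtain ⟨r, hr⟩ := pow_sub_dvd_iterate_derivative_of_pow_dvd j hdvd
  rw [hr, eval_mul, eval_pow, hq, zero_pow (by omega), zero_mul]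

theorem integral_eval_mul_eval_derivative (p q : ℝ[X]) (a b : ℝ) :
    ∫ x in a..b, p.eval x * (derivative q).eval x =
      p.eval b * q.eval b - p.eval a * q.eval a - ∫ x in a..b, (derivative p).eval x * q.eval x :=
  integral_mul_deriv_eq_deriv_mul (fun x _ ↦ p.hasDerivAt x) (fun x _ ↦ q.hasDerivAt x)
    ((derivative p).continuous.intervalIntegrable _ _)
    ((derivative q).continuous.intervalIntegrable _ _)

theorem integral_eval_mul_eval_iterate_derivative {F : ℝ[X]} {a b : ℝ} {n : ℕ}
    (hF : ∀ j < n, (derivative^[j] F).eval a = 0 ∧ (derivative^[j] F).eval b = 0) (q : ℝ[X]) :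
    ∫ x in a..b, q.eval x * (derivative^[n] F).eval x =
      (-1) ^ n * ∫ x in a..b, (derivative^[n] q).eval x * F.eval x := by
  induction n generalizing F with
  | zero => simp
  | succ n ih =>
    have hF' : ∀ j < n, (derivative^[j] (derivative F)).eval a = 0 ∧
        (derivative^[j] (derivative F)).eval b = 0 := fun j hj ↦ by
      simpa only [← Function.iterate_succ_apply] using hF (j + 1) (by omega)
    obtain ⟨ha, hb⟩ : F.eval a = 0 ∧ F.eval b = 0 := hF 0 n.succ_pos
    rw [Function.iterate_succ_apply, ih hF', integral_eval_mul_eval_derivative, ha, hb,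
      ← Function.iterate_succ_apply' derivative]
    ring

theorem integral_eval_mul_eval_iterate_derivative_eq_zero {F q : ℝ[X]} {a b : ℝ} {n : ℕ}
    (hF : ∀ j < n, (derivative^[j] F).eval a = 0 ∧ (derivative^[j] F).eval b = 0)
    (hq : q.degree < n) :
    ∫ x in a..b, q.eval x * (derivative^[n] F).eval x = 0 := by
  simp [integral_eval_mul_eval_iterate_derivative hF, iterate_derivative_eq_zero_of_degree_lt hq]

noncomputable def shiftedLegendreReal (n : ℕ) : ℝ[X] := (shiftedLegendre n).map (Int.castRingHom ℝ)

theorem factorial_mul_shiftedLegendreReal (n : ℕ) :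
    (n ! : ℝ[X]) * shiftedLegendreReal n = derivative^[n] (X ^ n * (1 - X) ^ n) := by
  have := congr(map (Int.castRingHom ℝ) $(factorial_mul_shiftedLegendre_eq n))
  rw [← iterate_derivative_map] at this
  simpa [shiftedLegendreReal] using this

theorem neg_one_pow_mul_shiftedLegendreReal_comp_one_sub_X (n : ℕ) :
    (-1) ^ n * (shiftedLegendreReal n).comp (1 - X) = shiftedLegendreReal n := by
  have := congr(map (Int.castRingHom ℝ) $(neg_one_pow_mul_shiftedLegendre_comp_one_sub_X_eq n))
  simpa [shiftedLegendreReal, map_comp] using this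

theorem coeff_shiftedLegendreReal (n k : ℕ) :
    (shiftedLegendreReal n).coeff k = (-1) ^ k * n.choose k * (n + k).choose n := by
  simp [shiftedLegendreReal, coeff_shiftedLegendre]

theorem eval_zero_shiftedLegendreReal (n : ℕ) : (shiftedLegendreReal n).eval 0 = 1 := by
  simp [← coeff_zero_eq_eval_zero, coeff_shiftedLegendreReal]

theorem eval_one_shiftedLegendreReal (n : ℕ) : (shiftedLegendreReal n).eval 1 = (-1) ^ n := by
  have := congr(eval 1 $(neg_one_pow_mul_shiftedLegendreReal_comp_one_sub_X n))
  simpa [eval_zero_shiftedLegendreReal] using this.symm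

theorem eval_one_derivative_shiftedLegendreReal (n : ℕ) :
    (derivative (shiftedLegendreReal n)).eval 1 = (-1) ^ n * (n * (n + 1)) := by
  -- differentiate the reflection symmetry; the derivative at `0` is the linear coefficient
  have := congr(eval 1 (derivative $(neg_one_pow_mul_shiftedLegendreReal_comp_one_sub_X n)))
  simpa [derivative_comp, derivative_pow, ← coeff_zero_eq_eval_zero, coeff_derivative,
    coeff_shiftedLegendreReal] using this.symm

theorem integral_eval_mul_shiftedLegendreReal_eq_zero {q : ℝ[X]} {n : ℕ} (hq : q.degree < n) :
    ∫ x in (0 : ℝ)..1, q.eval x * (shiftedLegendreReal n).eval x = 0 := by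
  have hF (j : ℕ) (hj : j < n) : (derivative^[j] (X ^ n * (1 - X) ^ n : ℝ[X])).eval 0 = 0 ∧
      (derivative^[j] (X ^ n * (1 - X) ^ n : ℝ[X])).eval 1 = 0 :=
    ⟨eval_iterate_derivative_eq_zero_of_pow_dvd (dvd_mul_right _ _) eval_X hj,
      eval_iterate_derivative_eq_zero_of_pow_dvd (dvd_mul_left _ _) (by simp) hj⟩
  have h := integral_eval_mul_eval_iterate_derivative_eq_zero hF hq
  simp_rw [← factorial_mul_shiftedLegendreReal, eval_mul, mul_left_comm _ (eval _ (n ! : ℝ[X])),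
    eval_natCast, intervalIntegral.integral_const_mul] at h
  simpa [Nat.factorial_ne_zero] using h

theorem natDegree_shiftedLegendreReal_le (n : ℕ) : (shiftedLegendreReal n).natDegree ≤ n :=
  natDegree_map_le.trans (natDegree_shiftedLegendre n).le

/-- With `L_k = (-1)^k • shiftedLegendre k` this is `((L_n + L_{n+1}) / 2)' = ∑_{k ≤ n} (2k+1) L_k`.
Its primitive vanishes at `0`, equals `1` at `1` and is orthogonal to all polynomials of degree
`< n`, so integrating by parts against it evaluates polynomials of degree `≤ n` at `1`. -/
noncomputable def reproducingKernelAtOne (n : ℕ) : ℝ[X] :=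
  derivative (C ((-1) ^ n / 2) * (shiftedLegendreReal n - shiftedLegendreReal (n + 1)))

theorem natDegree_reproducingKernelAtOne_le (n : ℕ) : (reproducingKernelAtOne n).natDegree ≤ n := by
  have h : (shiftedLegendreReal n - shiftedLegendreReal (n + 1)).natDegree ≤ n + 1 :=
    (natDegree_sub_le _ _).trans <| max_le
      ((natDegree_shiftedLegendreReal_le n).trans n.le_succ) (natDegree_shiftedLegendreReal_le _)
  have := (natDegree_C_mul_le ((-1 : ℝ) ^ n / 2) _).trans h
  exact (natDegree_derivative_le _).trans (by omega)

theorem integral_eval_mul_reproducingKernelAtOne {p : ℝ[X]} {n : ℕ} (hp : p.natDegree ≤ n) :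
    ∫ x in (0 : ℝ)..1, p.eval x * (reproducingKernelAtOne n).eval x = p.eval 1 := by
  have hp' : (derivative p).degree < n := by
    rcases eq_or_ne p 0 with rfl | h0
    · simp
    · exact (degree_derivative_lt h0).trans_le (degree_le_of_natDegree_le hp)
  have horth (k : ℕ) (hk : n ≤ k) :
      ∫ x in (0 : ℝ)..1, (derivative p).eval x * (shiftedLegendreReal k).eval x = 0 :=
    integral_eval_mul_shiftedLegendreReal_eq_zero (hp'.trans_le (by exact_mod_cast hk))
  have hint (k : ℕ) : IntervalIntegrable
      (fun x ↦ (derivative p).eval x * (shiftedLegendreReal k).eval x) volume 0 1 :=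
    ((derivative p).continuous.mul (shiftedLegendreReal k).continuous).intervalIntegrable _ _
  rw [reproducingKernelAtOne, integral_eval_mul_eval_derivative]
  simp only [eval_mul, eval_sub, eval_C, eval_zero_shiftedLegendreReal,
    eval_one_shiftedLegendreReal, mul_sub, mul_left_comm _ ((-1 : ℝ) ^ n / 2)]
  rw [integral_sub ((hint n).const_mul _) ((hint _).const_mul _),
    intervalIntegral.integral_const_mul, intervalIntegral.integral_const_mul, horth n le_rfl,
    horth _ n.le_succ]
  linear_combination p.eval 1 * (by rw [← mul_pow]; norm_num : (-1 : ℝ) ^ n * (-1) ^ n = 1)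

theorem eval_one_reproducingKernelAtOne (n : ℕ) :
    (reproducingKernelAtOne n).eval 1 = ((n : ℝ) + 1) ^ 2 := by
  simp only [reproducingKernelAtOne, derivative_mul, derivative_C, derivative_sub, zero_mul,
    zero_add, eval_mul, eval_sub, eval_C, eval_one_derivative_shiftedLegendreReal]
  push_cast
  linear_combination ((n : ℝ) + 1) ^ 2 * (by rw [← mul_pow]; norm_num : (-1 : ℝ) ^ n * (-1) ^ n = 1)

theorem sq_eval_one_le_integral_sq {p : ℝ[X]} {n : ℕ} (hp : p.natDegree ≤ n) :
    p.eval 1 ^ 2 ≤ ((n : ℝ) + 1) ^ 2 * ∫ x in (0 : ℝ)..1, p.eval x ^ 2 := by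
  set K := reproducingKernelAtOne n
  have hKK : ∫ x in (0 : ℝ)..1, K.eval x * K.eval x = ((n : ℝ) + 1) ^ 2 := by
    rw [integral_eval_mul_reproducingKernelAtOne (natDegree_reproducingKernelAtOne_le n),
      eval_one_reproducingKernelAtOne]
  have hc : (0 : ℝ) < ((n : ℝ) + 1) ^ 2 := by positivity
  -- `(p - t K)² ≥ 0` integrates to `2 t p(1) - t² (n+1)² ≤ ∫ p²`; optimise in `t`.
  set t := p.eval 1 / ((n : ℝ) + 1) ^ 2 with ht
  have key : ∫ x in (0 : ℝ)..1, (2 * t * (p.eval x * K.eval x) - t ^ 2 * (K.eval x * K.eval x)) ≤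
      ∫ x in (0 : ℝ)..1, p.eval x ^ 2 :=
    integral_mono zero_le_one (Continuous.intervalIntegrable (by fun_prop) _ _)
      (Continuous.intervalIntegrable (by fun_prop) _ _)
      fun x ↦ by nlinarith [sq_nonneg (p.eval x - t * K.eval x)]
  rw [integral_sub (Continuous.intervalIntegrable (by fun_prop) _ _)
      (Continuous.intervalIntegrable (by fun_prop) _ _), intervalIntegral.integral_const_mul,
    intervalIntegral.integral_const_mul, integral_eval_mul_reproducingKernelAtOne hp, hKK] at key
  rw [← div_le_iff₀' hc]
  refine le_of_eq_of_le ?_ key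
  rw [ht]
  field_simp
  ring

theorem mul_sq_eval_le_integral_sq_of_nonneg {p : ℝ[X]} {n : ℕ} (hp : p.natDegree ≤ n) {x : ℝ}
    (hx : 0 ≤ x) : x * p.eval x ^ 2 ≤ ((n : ℝ) + 1) ^ 2 * ∫ t in (0 : ℝ)..x, p.eval t ^ 2 := by
  have hdeg : (p.comp (C x * X)).natDegree ≤ n :=
    natDegree_comp_le.trans <| by
      simpa using Nat.mul_le_mul hp ((natDegree_C_mul_le x X).trans natDegree_X_le)
  have h := sq_eval_one_le_integral_sq hdeg
  simp only [eval_comp, eval_mul, eval_C, eval_X, mul_one] at h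
  have hsub := smul_integral_comp_mul_left (fun t ↦ p.eval t ^ 2) x (a := 0) (b := 1)
  simp only [mul_zero, mul_one, smul_eq_mul] at hsub
  rw [← hsub, mul_left_comm]
  exact mul_le_mul_of_nonneg_left h hx

theorem mul_sq_eval_le_integral_sq_of_le_one {p : ℝ[X]} {n : ℕ} (hp : p.natDegree ≤ n) {x : ℝ}
    (hx : x ≤ 1) : (1 - x) * p.eval x ^ 2 ≤ ((n : ℝ) + 1) ^ 2 * ∫ t in x..1, p.eval t ^ 2 := by
  have hdeg : (p.comp (1 - X)).natDegree ≤ n :=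
    natDegree_comp_le.trans <| by
      simpa using Nat.mul_le_mul hp (natDegree_sub_le_of_le natDegree_one.le natDegree_X_le)
  have h := mul_sq_eval_le_integral_sq_of_nonneg hdeg (sub_nonneg.2 hx)
  simp only [eval_comp, eval_sub, eval_one, eval_X, sub_sub_cancel] at h
  rwa [intervalIntegral.integral_comp_sub_left (fun t ↦ p.eval t ^ 2) 1, sub_sub_cancel,
    sub_zero] at h

theorem sq_eval_le_integral_sq {p : ℝ[X]} {n : ℕ} (hp : p.natDegree ≤ n) {x : ℝ}
    (hx : x ∈ Set.Icc 0 1) :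
    p.eval x ^ 2 ≤ ((n : ℝ) + 1) ^ 2 * ∫ t in (0 : ℝ)..1, p.eval t ^ 2 := by
  have h₀ := mul_sq_eval_le_integral_sq_of_nonneg hp hx.1
  have h₁ := mul_sq_eval_le_integral_sq_of_le_one hp hx.2
  rw [← integral_add_adjacent_intervals (Continuous.intervalIntegrable (by fun_prop) 0 x)
    (Continuous.intervalIntegrable (by fun_prop) x 1)]
  linarith

end Polynomial

theorem integral_mul_eq_dotProduct_hilbertMatrix_mulVec {m : ℕ} (α β : Fin m → ℝ) :
    ∫ z in (0 : ℝ)..1, (∑ i, α i * z ^ (i : ℕ)) * (∑ j, β j * z ^ (j : ℕ)) =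
      α ⬝ᵥ (hilbertMatrix m *ᵥ β) := by
  have hmon (i j : Fin m) :
      ∫ z in (0 : ℝ)..1, α i * β j * z ^ (i + j : ℕ) = α i * (hilbertMatrix m i j * β j) := by
    rw [intervalIntegral.integral_const_mul, integral_pow]
    simp [hilbertMatrix]
    ring
  have hrhs : α ⬝ᵥ (hilbertMatrix m *ᵥ β) = ∑ i, ∑ j, α i * (hilbertMatrix m i j * β j) := by
    simp [dotProduct, Matrix.mulVec, Finset.mul_sum]
  simp_rw [hrhs, ← hmon, Finset.sum_mul_sum]
  rw [integral_finsetSum fun i _ ↦ Continuous.intervalIntegrable (by fun_prop) _ _]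
  refine Finset.sum_congr rfl fun i _ ↦ ?_
  rw [integral_finsetSum fun j _ ↦ Continuous.intervalIntegrable (by fun_prop) _ _]
  refine Finset.sum_congr rfl fun j _ ↦ integral_congr fun z _ ↦ ?_
  simp only [pow_add]
  ring

/-- For every `x ∈ [0,1]`, the minimal moment function `w_m^x` satisfies
`∫_0^1 w_m^x(z)² dz ≤ m²`. -/
theorem minimal_moment_function_norm_bound
    (m : ℕ) (hm : 1 ≤ m) (x : ℝ) (hx : x ∈ Set.Icc (0 : ℝ) 1)
    (α : Fin m → ℝ)
    (hα : (hilbertMatrix m).mulVec α = fun i => x ^ (i.1)) :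
    (∫ z in Set.Icc (0 : ℝ) 1, (∑ i : Fin m, α i * z ^ (i.1)) ^ 2) ≤ (m : ℝ) ^ 2 := by
  obtain ⟨n, rfl⟩ : ∃ n, m = n + 1 := ⟨m - 1, by omega⟩
  set p : ℝ[X] := ∑ i : Fin (n + 1), C (α i) * X ^ (i : ℕ)
  have hp_eval (z : ℝ) : p.eval z = ∑ i, α i * z ^ (i : ℕ) := by simp [p, eval_finsetSum]
  have hp_deg : p.natDegree ≤ n := natDegree_sum_le_of_forall_le _ _ fun i _ ↦
    (natDegree_C_mul_X_pow_le _ _).trans (Nat.lt_succ_iff.1 i.2)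
  have hnorm : ∫ z in (0 : ℝ)..1, p.eval z ^ 2 = p.eval x := by
    simp_rw [hp_eval, sq, integral_mul_eq_dotProduct_hilbertMatrix_mulVec, hα, dotProduct]
  have hbound := sq_eval_le_integral_sq hp_deg hx
  have hnonneg : 0 ≤ p.eval x := hnorm ▸ integral_nonneg zero_le_one fun z _ ↦ sq_nonneg _
  rw [integral_Icc_eq_integral_Ioc, ← integral_of_le zero_le_one]
  simp_rw [← hp_eval]
  rw [hnorm] at hbound ⊢
  push_cast
  nlinarith
end

section
/- Fix an integer m ≥ 1 and x ∈ (0,1). Let g : [0,1] → ℝ be any integrable function satisfying ∫_0^1 z^h g(z) dz = 1 for all h = 0, 1, …, m-1 and ∫_0^1 g(z)² dz < ∞. Define g^x(z) := g(z/x)·1_{[0,x]}(z) and the piecewise function w̃(z) := g^x(z) for z ≤ x and w̃(z) := g^{1-x}(1-z) for z > x. Then w̃ satisfies the moment constraints ∫_0^1 z^h w̃(z) dz = x^h for all h = 0, 1, …, m-1, and its squared L²-norm equals that of g: ∫_0^1 w̃(z)² dz = ∫_0^1 g(z)² dz. -/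
open MeasureTheory

/-!
On `[0, x]` the function `w̃` is the copy of `g` compressed by the factor `x`, and on `[x, 1]` the
mirrored copy compressed by `1 - x`. Substituting `z = x v`, resp. `z = 1 - (1 - x) v`, turns
`∫₀¹ q(z) w̃(z) dz` into `x ∫₀¹ q(x v) g(v) dv + (1 - x) ∫₀¹ q(1 - (1 - x) v) g(v) dv`. The moment
conditions say exactly that `∫₀¹ p(v) g(v) dv = p(1)` for every polynomial `p` of degree `< m`, and
both substituted polynomials take the value `q(x)` at `v = 1`; hence `∫₀¹ q w̃ = q(x)`. The same
substitution applied to `w̃²` gives `(x + (1 - x)) ∫₀¹ g² = ∫₀¹ g²`.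
-/

open Set Polynomial

section Rescale

variable {Φ F : ℝ → ℝ} {a b c : ℝ}

theorem intervalIntegrable_of_eqOn_comp_div (hc : 0 < c) (hF : IntervalIntegrable F volume 0 1)
    (h : EqOn Φ (fun z => F (z / c)) (Icc 0 c)) : IntervalIntegrable Φ volume 0 c := by
  have hFc : IntervalIntegrable (fun z => F (z / c)) volume 0 c := by
    simpa [div_eq_mul_inv, hc.ne'] using hF.comp_mul_right (c := c⁻¹)
  rw [intervalIntegrable_iff_integrableOn_Ioc_of_le hc.le] at hFc ⊢
  exact hFc.congr_fun (fun z hz => (h (Ioc_subset_Icc_self hz)).symm) measurableSet_Ioc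

theorem intervalIntegral_eq_mul_of_eqOn_comp_div (hc : 0 < c)
    (h : EqOn Φ (fun z => F (z / c)) (Icc 0 c)) :
    ∫ z in 0..c, Φ z = c * ∫ v in 0..1, F v := by
  rw [intervalIntegral.integral_congr (by rwa [uIcc_of_le hc.le]),
    intervalIntegral.integral_comp_div F hc.ne', zero_div, div_self hc.ne', smul_eq_mul]

theorem eqOn_comp_sub_left_of_eqOn_comp_sub_div
    (h : EqOn Φ (fun z => F ((b - z) / (b - a))) (Icc a b)) :
    EqOn (fun u => Φ (b - u)) (fun u => F (u / (b - a))) (Icc 0 (b - a)) := by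
  intro u hu
  have hmem : b - u ∈ Icc a b := ⟨by linarith [hu.2], by linarith [hu.1]⟩
  simpa using h hmem

theorem intervalIntegrable_of_eqOn_comp_sub_div (hab : a < b)
    (hF : IntervalIntegrable F volume 0 1)
    (h : EqOn Φ (fun z => F ((b - z) / (b - a))) (Icc a b)) : IntervalIntegrable Φ volume a b := by
  have := (intervalIntegrable_of_eqOn_comp_div (sub_pos.2 hab) hF
    (eqOn_comp_sub_left_of_eqOn_comp_sub_div h)).comp_sub_left b
  simpa using this.symm

theorem intervalIntegral_eq_mul_of_eqOn_comp_sub_div (hab : a < b)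
    (h : EqOn Φ (fun z => F ((b - z) / (b - a))) (Icc a b)) :
    ∫ z in a..b, Φ z = (b - a) * ∫ v in 0..1, F v := by
  rw [← intervalIntegral_eq_mul_of_eqOn_comp_div (sub_pos.2 hab)
    (eqOn_comp_sub_left_of_eqOn_comp_sub_div h), intervalIntegral.integral_comp_sub_left]
  simp

end Rescale

theorem intervalIntegral_eq_of_eqOn_glued_rescale {Φ F₁ F₂ : ℝ → ℝ} {x : ℝ} (hx : x ∈ Ioo (0 : ℝ) 1)
    (hF₁ : IntervalIntegrable F₁ volume 0 1) (hF₂ : IntervalIntegrable F₂ volume 0 1)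
    (h₁ : EqOn Φ (fun z => F₁ (z / x)) (Icc 0 x))
    (h₂ : EqOn Φ (fun z => F₂ ((1 - z) / (1 - x))) (Icc x 1)) :
    ∫ z in 0..1, Φ z = x * (∫ v in 0..1, F₁ v) + (1 - x) * ∫ v in 0..1, F₂ v := by
  rw [← intervalIntegral.integral_add_adjacent_intervals
      (intervalIntegrable_of_eqOn_comp_div hx.1 hF₁ h₁)
      (intervalIntegrable_of_eqOn_comp_sub_div hx.2 hF₂ h₂),
    intervalIntegral_eq_mul_of_eqOn_comp_div hx.1 h₁,
    intervalIntegral_eq_mul_of_eqOn_comp_sub_div hx.2 h₂]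

theorem intervalIntegral_eval_mul_eq_eval_one {g : ℝ → ℝ} {m : ℕ}
    (hg : IntervalIntegrable g volume 0 1) (hmom : ∀ k < m, ∫ v in 0..1, v ^ k * g v = 1)
    {p : ℝ[X]} (hp : p.natDegree < m) :
    ∫ v in 0..1, p.eval v * g v = p.eval 1 := by
  have hterm : ∀ k ∈ Finset.range (p.natDegree + 1),
      ∫ v in 0..1, p.coeff k * (v ^ k * g v) = p.coeff k * 1 ^ k := by
    intro k hk
    rw [intervalIntegral.integral_const_mul,
      hmom k (lt_of_lt_of_le (Finset.mem_range.1 hk) hp), one_pow]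
  simp_rw [eval_eq_sum_range, Finset.sum_mul, mul_assoc]
  rw [intervalIntegral.integral_finsetSum, Finset.sum_congr rfl hterm]
  exact fun k _ => (hg.continuousOn_mul (continuous_pow k).continuousOn).const_mul _

theorem natDegree_comp_linear_le (q : ℝ[X]) (a b : ℝ) :
    (q.comp (C a * X + C b)).natDegree ≤ q.natDegree :=
  natDegree_comp_le.trans ((Nat.mul_le_mul_left _ natDegree_linear_le).trans_eq (mul_one _))

section Glued

variable {g w : ℝ → ℝ} {x : ℝ}

theorem intervalIntegral_eval_mul_of_eqOn_rescale {m : ℕ} (hx : x ∈ Ioo (0 : ℝ) 1)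
    (hg : IntervalIntegrable g volume 0 1) (hmom : ∀ k < m, ∫ v in 0..1, v ^ k * g v = 1)
    (h₁ : EqOn w (fun z => g (z / x)) (Icc 0 x))
    (h₂ : EqOn w (fun z => g ((1 - z) / (1 - x))) (Icc x 1)) {q : ℝ[X]} (hq : q.natDegree < m) :
    ∫ z in 0..1, q.eval z * w z = q.eval x := by
  have hx' : 1 - x ≠ 0 := (sub_pos.2 hx.2).ne'
  set p₁ := q.comp (C x * X + C 0)
  set p₂ := q.comp (C (x - 1) * X + C 1)
  have hint : ∀ p : ℝ[X], IntervalIntegrable (fun v => p.eval v * g v) volume 0 1 :=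
    fun p => hg.continuousOn_mul p.continuous.continuousOn
  have hp₁ : EqOn (fun z => q.eval z * w z) (fun z => p₁.eval (z / x) * g (z / x)) (Icc 0 x) := by
    intro z hz
    simp [p₁, h₁ hz, mul_div_cancel₀ z hx.1.ne']
  have hp₂ : EqOn (fun z => q.eval z * w z)
      (fun z => p₂.eval ((1 - z) / (1 - x)) * g ((1 - z) / (1 - x))) (Icc x 1) := by
    intro z hz
    have : (x - 1) * ((1 - z) / (1 - x)) + 1 = z := by field_simp; ring
    simp [p₂, h₂ hz, this]
  rw [intervalIntegral_eq_of_eqOn_glued_rescale hx (hint p₁) (hint p₂) hp₁ hp₂,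
    intervalIntegral_eval_mul_eq_eval_one hg hmom ((natDegree_comp_linear_le q _ _).trans_lt hq),
    intervalIntegral_eval_mul_eq_eval_one hg hmom ((natDegree_comp_linear_le q _ _).trans_lt hq)]
  simp only [eval_comp, eval_add, eval_mul, eval_C, eval_X, mul_one, add_zero,
    sub_add_cancel]
  ring

theorem intervalIntegral_sq_of_eqOn_rescale (hx : x ∈ Ioo (0 : ℝ) 1)
    (hg : IntervalIntegrable (fun v => g v ^ 2) volume 0 1)
    (h₁ : EqOn w (fun z => g (z / x)) (Icc 0 x))
    (h₂ : EqOn w (fun z => g ((1 - z) / (1 - x))) (Icc x 1)) :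
    ∫ z in 0..1, w z ^ 2 = ∫ v in 0..1, g v ^ 2 := by
  rw [intervalIntegral_eq_of_eqOn_glued_rescale hx hg hg (fun z hz => by simp [h₁ hz])
    (fun z hz => by simp [h₂ hz])]
  ring

end Glued

theorem piecewise_transfer_of_moment_function_general
    (m : ℕ) (x : ℝ) (hx : x ∈ Set.Ioo (0 : ℝ) 1)
    (g : ℝ → ℝ)
    (hgint : IntegrableOn g (Set.Icc (0 : ℝ) 1))
    (hgsq : IntegrableOn (fun z => (g z) ^ 2) (Set.Icc (0 : ℝ) 1))
    (hmom : ∀ h < m, ∫ z in Set.Icc (0 : ℝ) 1, z ^ h * g z = 1)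
    (gs : ℝ → ℝ → ℝ)
    (hgs : gs = fun a z => if z ∈ Set.Icc (0 : ℝ) a then g (z / a) else 0)
    (wt : ℝ → ℝ)
    (hwt : wt = fun z => if z ≤ x then gs x z else gs (1 - x) (1 - z)) :
    (∀ h < m, ∫ z in Set.Icc (0 : ℝ) 1, z ^ h * wt z = x ^ h) ∧
      (∫ z in Set.Icc (0 : ℝ) 1, (wt z) ^ 2) = ∫ z in Set.Icc (0 : ℝ) 1, (g z) ^ 2 := by
  have hIcc (f : ℝ → ℝ) : ∫ z in Icc (0 : ℝ) 1, f z = ∫ z in 0..1, f z := by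
    rw [integral_Icc_eq_integral_Ioc, intervalIntegral.integral_of_le zero_le_one]
  have h₁ : EqOn wt (fun z => g (z / x)) (Icc 0 x) := fun z hz => by
    simp only [hwt, hgs, if_pos hz.2, if_pos hz]
  have h₂ : EqOn wt (fun z => g ((1 - z) / (1 - x))) (Icc x 1) := fun z hz => by
    rcases hz.1.eq_or_lt with rfl | hxz
    · simp [hwt, hgs, hx.1.le, hx.1.ne', (sub_pos.2 hx.2).ne']
    · have hmem : 1 - z ∈ Icc 0 (1 - x) := ⟨by linarith [hz.2], by linarith⟩
      simp only [hwt, hgs, if_neg (not_le.2 hxz), if_pos hmem]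
  simp_rw [hIcc] at hmom ⊢
  have hgI := (intervalIntegrable_iff_integrableOn_Icc_of_le zero_le_one).2 hgint
  have hgsqI := (intervalIntegrable_iff_integrableOn_Icc_of_le zero_le_one).2 hgsq
  refine ⟨fun h hh => ?_, intervalIntegral_sq_of_eqOn_rescale hx hgsqI h₁ h₂⟩
  simpa using intervalIntegral_eval_mul_of_eqOn_rescale hx hgI hmom h₁ h₂
    (q := X ^ h) (by simpa using hh)

/-- If `g` is square-integrable on `[0,1]` with `∫_0^1 z^h g(z) dz = 1` for
`h = 0,…,m-1`, and `x ∈ (0,1)`, then the piecewise function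
`w̃(z) = g^x(z)` for `z ≤ x`, `w̃(z) = g^{1-x}(1-z)` for `z > x`
(where `g^a(z) := g(z/a)·1_{[0,a]}(z)`) satisfies the moment constraints
`∫_0^1 z^h w̃(z) dz = x^h` for `h = 0,…,m-1`, and `∫_0^1 w̃(z)² dz = ∫_0^1 g(z)² dz`. -/
theorem piecewise_transfer_of_moment_function
    (m : ℕ) (hm : 1 ≤ m) (x : ℝ) (hx : x ∈ Set.Ioo (0 : ℝ) 1)
    (g : ℝ → ℝ)
    (hgint : IntegrableOn g (Set.Icc (0 : ℝ) 1))
    (hgsq : IntegrableOn (fun z => (g z) ^ 2) (Set.Icc (0 : ℝ) 1))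
    (hmom : ∀ h < m, ∫ z in Set.Icc (0 : ℝ) 1, z ^ h * g z = 1)
    (gs : ℝ → ℝ → ℝ)
    (hgs : gs = fun a z => if z ∈ Set.Icc (0 : ℝ) a then g (z / a) else 0)
    (wt : ℝ → ℝ)
    (hwt : wt = fun z => if z ≤ x then gs x z else gs (1 - x) (1 - z)) :
    (∀ h < m, ∫ z in Set.Icc (0 : ℝ) 1, z ^ h * wt z = x ^ h) ∧
      (∫ z in Set.Icc (0 : ℝ) 1, (wt z) ^ 2) = ∫ z in Set.Icc (0 : ℝ) 1, (g z) ^ 2 :=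
  piecewise_transfer_of_moment_function_general m x hx g hgint hgsq hmom gs hgs wt hwt
end

section
/- Let d ≥ 1, m ≥ 1 be integers and let p be a probability density on [0,1]^d with 0 < inf p ≤ sup p < ∞. For x = (x_1,…,x_d) ∈ [0,1]^d define W_m^x(z_1,…,z_d) := (∏_{i=1}^d w_m^{x_i}(z_i)) · p(z_1,…,z_d)^{-1}. Then for all y ∈ [0,1]^d and all nonnegative integers ℓ with 2ℓ ≤ m-1, the generalized moment property ∫_{[0,1]^d} (‖y-z‖₂²)^ℓ W_m^x(z) p(z) dz = (‖y-x‖₂²)^ℓ holds. -/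
/-!
The Hilbert system says exactly that `w_m^x` has the moments `∫₀¹ tᵏ w_m^x(t) dt = xᵏ` for
`k < m`, so it integrates every polynomial of degree `< m` to its value at `x`. Since `p` cancels,
the integrand is `‖y - z‖²ˡ ∏ᵢ w_m^{xᵢ}(zᵢ)`; by the multinomial theorem `‖y - z‖²ˡ` is a
combination of products `∏ᵢ (yᵢ - zᵢ)^(2kᵢ)` with `kᵢ ≤ ℓ`, and by Fubini each such product
integrates factorwise to `∏ᵢ (yᵢ - xᵢ)^(2kᵢ)`, as `2ℓ < m`.
-/

open MeasureTheory

open Finset Polynomial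

/-- With `α = H_m⁻¹ (1, x, …, x^(m-1))` this is the paper's `w_m^x`. -/
noncomputable def momentWeight {m : ℕ} (α : Fin m → ℝ) (t : ℝ) : ℝ :=
  ∑ j : Fin m, α j * t ^ (j : ℕ)

@[fun_prop]
lemma continuous_momentWeight {m : ℕ} (α : Fin m → ℝ) : Continuous (momentWeight α) := by
  unfold momentWeight
  fun_prop

lemma setIntegral_Icc_zero_one_pow (n : ℕ) : ∫ t in Set.Icc (0 : ℝ) 1, t ^ n = 1 / (n + 1) := by
  rw [integral_Icc_eq_integral_Ioc, ← intervalIntegral.integral_of_le zero_le_one, integral_pow]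
  simp

lemma setIntegral_Icc_pi_prod {ι : Type*} [Fintype ι] (a b : ι → ℝ) (f : ι → ℝ → ℝ) :
    ∫ z in Set.Icc a b, ∏ i, f i (z i) = ∏ i, ∫ t in Set.Icc (a i) (b i), f i t := by
  rw [← Set.pi_univ_Icc, volume_pi, Measure.restrict_pi_pi, integral_fintype_prod_eq_prod]

section momentWeight

variable {m : ℕ} {x : ℝ} {α : Fin m → ℝ}

lemma setIntegral_pow_mul_momentWeight (hα : (hilbertMatrix m).mulVec α = fun j => x ^ j.1)
    (k : Fin m) : ∫ t in Set.Icc (0 : ℝ) 1, t ^ (k : ℕ) * momentWeight α t = x ^ (k : ℕ) := by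
  have hmoment : ∀ j : Fin m, ∫ t in Set.Icc (0 : ℝ) 1, t ^ (k : ℕ) * (α j * t ^ (j : ℕ))
      = hilbertMatrix m k j * α j := by
    intro j
    simp_rw [mul_left_comm _ (α j), ← pow_add]
    rw [integral_const_mul, setIntegral_Icc_zero_one_pow, hilbertMatrix]
    push_cast
    ring
  rw [← congrFun hα k]
  unfold momentWeight
  simp_rw [mul_sum]
  rw [integral_finsetSum _ fun j _ => (by fun_prop : Continuous _).integrableOn_Icc]
  simp_rw [hmoment, Matrix.mulVec, dotProduct]

lemma setIntegral_eval_mul_momentWeight (hα : (hilbertMatrix m).mulVec α = fun j => x ^ j.1)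
    {q : ℝ[X]} (hq : q.natDegree < m) :
    ∫ t in Set.Icc (0 : ℝ) 1, q.eval t * momentWeight α t = q.eval x := by
  simp_rw [eval_eq_sum_range' hq, sum_mul, ← Fin.sum_univ_eq_sum_range, mul_assoc]
  rw [integral_finsetSum _ fun k _ => (by fun_prop : Continuous _).integrableOn_Icc]
  simp_rw [integral_const_mul, setIntegral_pow_mul_momentWeight hα]

lemma setIntegral_sub_pow_mul_momentWeight (hα : (hilbertMatrix m).mulVec α = fun j => x ^ j.1)
    (y : ℝ) {n : ℕ} (hn : n < m) :
    ∫ t in Set.Icc (0 : ℝ) 1, (y - t) ^ n * momentWeight α t = (y - x) ^ n := by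
  have hdeg : ((C y - X) ^ n).natDegree < m :=
    (natDegree_pow_le_of_le n (by compute_degree)).trans_lt (by simpa using hn)
  simpa using setIntegral_eval_mul_momentWeight hα hdeg

end momentWeight

theorem setIntegral_sum_sq_pow_mul_prod {ι : Type*} [Fintype ι] (a b x y : ι → ℝ)
    (w : ι → ℝ → ℝ) (hw : ∀ i, Continuous (w i)) {ℓ : ℕ}
    (hrep : ∀ i, ∀ n ≤ 2 * ℓ,
      ∫ t in Set.Icc (a i) (b i), (y i - t) ^ n * w i t = (y i - x i) ^ n) :
    ∫ z in Set.Icc a b, (∑ i, (y i - z i) ^ 2) ^ ℓ * ∏ i, w i (z i)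
      = (∑ i, (y i - x i) ^ 2) ^ ℓ := by
  classical
  have hterm : ∀ k ∈ piAntidiag univ ℓ,
      ∫ z in Set.Icc a b, (Nat.multinomial univ k : ℝ) * ∏ i, (y i - z i) ^ (2 * k i) * w i (z i)
        = Nat.multinomial univ k * ∏ i, (y i - x i) ^ (2 * k i) := by
    intro k hk
    have hkℓ : ∀ i, k i ≤ ℓ := fun i =>
      (mem_piAntidiag.1 hk).1 ▸ single_le_sum (fun _ _ => Nat.zero_le _) (mem_univ i)
    rw [integral_const_mul, setIntegral_Icc_pi_prod a b fun i t => (y i - t) ^ (2 * k i) * w i t]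
    simp_rw [hrep _ _ (Nat.mul_le_mul_left 2 (hkℓ _))]
  simp_rw [sum_pow_eq_sum_piAntidiag, sum_mul, mul_assoc, ← prod_mul_distrib, ← pow_mul]
  rw [integral_finsetSum _ fun k _ => (by fun_prop : Continuous _).integrableOn_Icc]
  exact sum_congr rfl hterm

theorem multivariate_moment_property_general
    (d m : ℕ) (hm : 1 ≤ m)
    (p : (Fin d → ℝ) → ℝ)
    (hpl : ∃ c : ℝ, 0 < c ∧ ∀ z ∈ Set.Icc (0 : Fin d → ℝ) 1, c ≤ p z)
    (x : Fin d → ℝ)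
    (α : Fin d → Fin m → ℝ)
    (hα : ∀ i : Fin d, (hilbertMatrix m).mulVec (α i) = fun j => (x i) ^ (j.1))
    (W : (Fin d → ℝ) → ℝ)
    (hW : W = fun z => (∏ i : Fin d, ∑ j : Fin m, α i j * (z i) ^ (j.1)) * (p z)⁻¹)
    (y : Fin d → ℝ)
    (ℓ : ℕ) (hℓ : 2 * ℓ ≤ m - 1) :
    (∫ z in Set.Icc (0 : Fin d → ℝ) 1, (∑ i : Fin d, (y i - z i) ^ 2) ^ ℓ * W z * p z)
      = (∑ i : Fin d, (y i - x i) ^ 2) ^ ℓ := by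
  obtain ⟨c, hc, hcp⟩ := hpl
  have hWp : Set.EqOn (fun z => (∑ i : Fin d, (y i - z i) ^ 2) ^ ℓ * W z * p z)
      (fun z => (∑ i : Fin d, (y i - z i) ^ 2) ^ ℓ * ∏ i, momentWeight (α i) (z i))
      (Set.Icc 0 1) := by
    intro z hz
    have hpz : p z ≠ 0 := (hc.trans_le (hcp z hz)).ne'
    simp only [hW, momentWeight, mul_assoc, inv_mul_cancel_right₀ hpz]
  rw [setIntegral_congr_fun measurableSet_Icc hWp]
  exact setIntegral_sum_sq_pow_mul_prod 0 1 x y (fun i => momentWeight (α i))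
    (fun i => continuous_momentWeight (α i))
    fun i n hn => setIntegral_sub_pow_mul_momentWeight (hα i) (y i) (by omega)

/-- The multivariate weight function
`W_m^x(z) = (∏_{i=1}^d w_m^{x_i}(z_i)) · p(z)⁻¹` satisfies the generalized moment
property `∫_{[0,1]^d} (‖y-z‖₂²)^ℓ W_m^x(z) p(z) dz = (‖y-x‖₂²)^ℓ` for all
`y ∈ [0,1]^d` and all nonnegative integers `ℓ` with `2ℓ ≤ m-1`. -/
theorem multivariate_moment_property
    (d m : ℕ) (hd : 1 ≤ d) (hm : 1 ≤ m)
    (p : (Fin d → ℝ) → ℝ)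
    (hp1 : (∫ z in Set.Icc (0 : Fin d → ℝ) 1, p z) = 1)
    (hpl : ∃ c : ℝ, 0 < c ∧ ∀ z ∈ Set.Icc (0 : Fin d → ℝ) 1, c ≤ p z)
    (hpu : ∃ C : ℝ, ∀ z ∈ Set.Icc (0 : Fin d → ℝ) 1, p z ≤ C)
    (x : Fin d → ℝ) (hx : x ∈ Set.Icc (0 : Fin d → ℝ) 1)
    (α : Fin d → Fin m → ℝ)
    (hα : ∀ i : Fin d, (hilbertMatrix m).mulVec (α i) = fun j => (x i) ^ (j.1))
    (W : (Fin d → ℝ) → ℝ)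
    (hW : W = fun z => (∏ i : Fin d, ∑ j : Fin m, α i j * (z i) ^ (j.1)) * (p z)⁻¹)
    (y : Fin d → ℝ) (hy : y ∈ Set.Icc (0 : Fin d → ℝ) 1)
    (ℓ : ℕ) (hℓ : 2 * ℓ ≤ m - 1) :
    (∫ z in Set.Icc (0 : Fin d → ℝ) 1, (∑ i : Fin d, (y i - z i) ^ 2) ^ ℓ * W z * p z)
      = (∑ i : Fin d, (y i - x i) ^ 2) ^ ℓ :=
  multivariate_moment_property_general d m hm p hpl x α hα W hW y ℓ hℓ
end

section
/- Let X be a set, b > 0, and let (φ_ℓ)_{ℓ≥1} be real-valued functions on X satisfying |φ_ℓ(x)| ≤ b ℓ² for all x ∈ X and all ℓ ≥ 1. Let s > 3 and let (c_ℓ)_{ℓ≥1} be real coefficients with ‖f‖_s² := Σ_{ℓ=1}^∞ c_ℓ² ℓ^{2s} < ∞, and set ‖f‖₂² := Σ_{ℓ=1}^∞ c_ℓ². Then for every x ∈ X the series f(x) = Σ_{ℓ=1}^∞ c_ℓ φ_ℓ(x) converges absolutely and satisfies the interpolation inequality |f(x)| ≤ (π/√6) · b · ‖f‖_s^{3/s}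 · ‖f‖₂^{1−3/s}; in particular sup_{x∈X} |f(x)| ≤ (π/√6) b ‖f‖_s^{3/s} ‖f‖₂^{1−3/s}. -/
/-!
The bound `|φ_ℓ| ≤ b ℓ²` reduces everything to `∑ |c_ℓ| ℓ²`. Cauchy–Schwarz against `(1/ℓ)`
gives `∑ |c_ℓ| ℓ² ≤ ζ(2)^{1/2} (∑ c_ℓ² ℓ⁶)^{1/2}`, and Hölder's inequality with the exponents
`s/3` and `s/(s-3)` interpolates `∑ c_ℓ² ℓ⁶` between `∑ c_ℓ² ℓ^{2s}` and `∑ c_ℓ²`: it is at most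
`‖f‖_s^{6/s} ‖f‖₂^{2-6/s}`.
-/

open Real

theorem Real.sqrt_rpow {x : ℝ} (hx : 0 ≤ x) (θ : ℝ) : √(x ^ θ) = √x ^ θ := by
  rw [sqrt_eq_rpow, ← rpow_mul hx, mul_one_div, rpow_div_two_eq_sqrt θ hx]

theorem summable_and_tsum_rpow_mul_rpow_le {ι : Type*} {u v : ι → ℝ} {θ : ℝ}
    (hθ₀ : 0 < θ) (hθ₁ : θ < 1) (hu : ∀ i, 0 ≤ u i) (hv : ∀ i, 0 ≤ v i)
    (hu_sum : Summable u) (hv_sum : Summable v) :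
    Summable (fun i => u i ^ θ * v i ^ (1 - θ)) ∧
      ∑' i, u i ^ θ * v i ^ (1 - θ) ≤ (∑' i, u i) ^ θ * (∑' i, v i) ^ (1 - θ) := by
  have hθ₁' : 0 < 1 - θ := sub_pos.2 hθ₁
  have hu' : ∀ i, (u i ^ θ) ^ θ⁻¹ = u i := fun i => rpow_rpow_inv (hu i) hθ₀.ne'
  have hv' : ∀ i, (v i ^ (1 - θ)) ^ (1 - θ)⁻¹ = v i := fun i => rpow_rpow_inv (hv i) hθ₁'.ne'
  simpa only [hu', hv', one_div, inv_inv] using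
    summable_and_inner_le_Lp_mul_Lq_tsum_of_nonneg (HolderConjugate.inv_one_sub_inv hθ₀ hθ₁)
      (fun i => rpow_nonneg (hu i) θ) (fun i => rpow_nonneg (hv i) (1 - θ))
      (by simpa only [hu'] using hu_sum) (by simpa only [hv'] using hv_sum)

theorem summable_and_tsum_mul_le_sqrt_mul_sqrt {ι : Type*} {f g : ι → ℝ}
    (hf : ∀ i, 0 ≤ f i) (hg : ∀ i, 0 ≤ g i)
    (hf_sum : Summable fun i => f i ^ 2) (hg_sum : Summable fun i => g i ^ 2) :
    Summable (fun i => f i * g i) ∧ ∑' i, f i * g i ≤ √(∑' i, f i ^ 2) * √(∑' i, g i ^ 2) := by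
  simpa only [rpow_two, sqrt_eq_rpow] using
    summable_and_inner_le_Lp_mul_Lq_tsum_of_nonneg HolderConjugate.two_two hf hg
      (by simpa only [rpow_two] using hf_sum) (by simpa only [rpow_two] using hg_sum)

theorem hasSum_one_div_succ_sq :
    HasSum (fun n : ℕ => 1 / ((n + 1 : ℕ) : ℝ) ^ 2) (π ^ 2 / 6) := by
  simpa using (hasSum_nat_add_iff' 1).2 hasSum_zeta_two

theorem summable_and_tsum_sq_mul_rpow_le {ι : Type*} {a w : ι → ℝ} {t s : ℝ}
    (hw : ∀ i, 0 ≤ w i) (ht : 0 < t) (hts : t < s)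
    (hs_sum : Summable fun i => a i ^ 2 * w i ^ (2 * s)) (h_sum : Summable fun i => a i ^ 2) :
    Summable (fun i => a i ^ 2 * w i ^ (2 * t)) ∧
      ∑' i, a i ^ 2 * w i ^ (2 * t)
        ≤ (∑' i, a i ^ 2 * w i ^ (2 * s)) ^ (t / s) * (∑' i, a i ^ 2) ^ (1 - t / s) := by
  have hs : 0 < s := ht.trans hts
  have hsplit : ∀ i, (a i ^ 2 * w i ^ (2 * s)) ^ (t / s) * (a i ^ 2) ^ (1 - t / s)
      = a i ^ 2 * w i ^ (2 * t) := fun i => by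
    rw [mul_rpow (sq_nonneg _) (rpow_nonneg (hw i) _), ← rpow_mul (hw i), mul_right_comm,
      ← rpow_add' (sq_nonneg _) (by simp), add_sub_cancel, rpow_one, mul_assoc,
      mul_div_cancel₀ t hs.ne']
  simpa only [hsplit] using summable_and_tsum_rpow_mul_rpow_le (div_pos ht hs)
    ((div_lt_one hs).2 hts) (fun i => mul_nonneg (sq_nonneg _) (rpow_nonneg (hw i) _))
    (fun i => sq_nonneg _) hs_sum h_sum

theorem summable_and_tsum_abs_mul_sq_le {a : ℕ → ℝ}
    (h : Summable fun ℓ => a ℓ ^ 2 * ((ℓ + 1 : ℕ) : ℝ) ^ 6) :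
    Summable (fun ℓ => |a ℓ| * ((ℓ + 1 : ℕ) : ℝ) ^ 2) ∧
      ∑' ℓ, |a ℓ| * ((ℓ + 1 : ℕ) : ℝ) ^ 2
        ≤ π / √6 * √(∑' ℓ, a ℓ ^ 2 * ((ℓ + 1 : ℕ) : ℝ) ^ 6) := by
  set n : ℕ → ℝ := fun ℓ => ((ℓ + 1 : ℕ) : ℝ)
  have hn : ∀ ℓ, n ℓ ≠ 0 := fun ℓ => Nat.cast_ne_zero.2 ℓ.succ_ne_zero
  have hf : ∀ ℓ, (|a ℓ| * n ℓ ^ 3) ^ 2 = a ℓ ^ 2 * n ℓ ^ 6 := fun ℓ => by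
    rw [mul_pow, sq_abs, ← pow_mul]
  have hg : ∀ ℓ, (n ℓ)⁻¹ ^ 2 = 1 / n ℓ ^ 2 := fun ℓ => by rw [inv_pow, one_div]
  have hfg : ∀ ℓ, |a ℓ| * n ℓ ^ 3 * (n ℓ)⁻¹ = |a ℓ| * n ℓ ^ 2 := fun ℓ => by
    field_simp
  have hζ : √(∑' ℓ, 1 / n ℓ ^ 2) = π / √6 := by
    rw [show ∑' ℓ, 1 / n ℓ ^ 2 = π ^ 2 / 6 from hasSum_one_div_succ_sq.tsum_eq,
      sqrt_div (sq_nonneg π), sqrt_sq pi_nonneg]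
  have hcs := summable_and_tsum_mul_le_sqrt_mul_sqrt (f := fun ℓ => |a ℓ| * n ℓ ^ 3)
    (g := fun ℓ => (n ℓ)⁻¹) (fun ℓ => by positivity) (fun ℓ => by positivity)
    (by simpa only [hf] using h) (by simpa only [hg] using hasSum_one_div_succ_sq.summable)
  simp only [hf, hg, hfg, hζ] at hcs
  exact ⟨hcs.1, hcs.2.trans_eq (mul_comm _ _)⟩

theorem summable_and_tsum_abs_mul_sq_le_interpolation {a : ℕ → ℝ} {s : ℝ} (hs : 3 < s)
    (h : Summable fun ℓ => a ℓ ^ 2 * ((ℓ + 1 : ℕ) : ℝ) ^ (2 * s)) :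
    Summable (fun ℓ => |a ℓ| * ((ℓ + 1 : ℕ) : ℝ) ^ 2) ∧
      ∑' ℓ, |a ℓ| * ((ℓ + 1 : ℕ) : ℝ) ^ 2
        ≤ π / √6 * (√(∑' ℓ, a ℓ ^ 2 * ((ℓ + 1 : ℕ) : ℝ) ^ (2 * s)) ^ (3 / s)
          * √(∑' ℓ, a ℓ ^ 2) ^ (1 - 3 / s)) := by
  have hn : ∀ ℓ : ℕ, (1 : ℝ) ≤ ((ℓ + 1 : ℕ) : ℝ) := fun ℓ => Nat.one_le_cast.2 ℓ.succ_pos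
  have h₂ : Summable fun ℓ => a ℓ ^ 2 :=
    h.of_nonneg_of_le (fun ℓ => sq_nonneg _) fun ℓ =>
      le_mul_of_one_le_right (sq_nonneg _) (one_le_rpow (hn ℓ) (by linarith))
  have hpow₆ : ∀ ℓ : ℕ, ((ℓ + 1 : ℕ) : ℝ) ^ (2 * (3 : ℝ)) = ((ℓ + 1 : ℕ) : ℝ) ^ 6 := fun ℓ => by
    rw [show 2 * (3 : ℝ) = (6 : ℕ) by norm_num, rpow_natCast]
  obtain ⟨h₆, hinterp⟩ :=
    summable_and_tsum_sq_mul_rpow_le (fun ℓ => zero_le_one.trans (hn ℓ)) three_pos hs h h₂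
  simp only [hpow₆] at h₆ hinterp
  obtain ⟨hsum, hle⟩ := summable_and_tsum_abs_mul_sq_le h₆
  refine ⟨hsum, hle.trans (mul_le_mul_of_nonneg_left ?_ (by positivity))⟩
  rw [← sqrt_rpow (tsum_nonneg fun ℓ => by positivity),
    ← sqrt_rpow (tsum_nonneg fun ℓ => by positivity), ← sqrt_mul (by positivity)]
  exact sqrt_le_sqrt hinterp

/-- Interpolation inequality: if `|φ_ℓ(x)| ≤ b ℓ²` for all `ℓ ≥ 1` and
`‖f‖_s² = ∑_{ℓ≥1} c_ℓ² ℓ^{2s} < ∞` with `s > 3`, then for every `x` the series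
`f(x) = ∑_{ℓ≥1} c_ℓ φ_ℓ(x)` converges absolutely and
`|f(x)| ≤ (π/√6) · b · ‖f‖_s^{3/s} · ‖f‖₂^{1−3/s}`. -/
theorem interpolation_inequality
    {X : Type*} (b : ℝ) (hb : 0 < b)
    (φ : ℕ → X → ℝ) (c : ℕ → ℝ) (s : ℝ) (hs : 3 < s)
    (hφ : ∀ ℓ : ℕ, 1 ≤ ℓ → ∀ x : X, |φ ℓ x| ≤ b * (ℓ : ℝ) ^ 2)
    (hsum : Summable (fun ℓ : ℕ => (c (ℓ + 1)) ^ 2 * ((ℓ + 1 : ℕ) : ℝ) ^ (2 * s)))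
    (Ns N2 : ℝ)
    (hNs : Ns = Real.sqrt (∑' ℓ : ℕ, (c (ℓ + 1)) ^ 2 * ((ℓ + 1 : ℕ) : ℝ) ^ (2 * s)))
    (hN2 : N2 = Real.sqrt (∑' ℓ : ℕ, (c (ℓ + 1)) ^ 2))
    (x : X) :
    Summable (fun ℓ : ℕ => |c (ℓ + 1) * φ (ℓ + 1) x|) ∧
      |∑' ℓ : ℕ, c (ℓ + 1) * φ (ℓ + 1) x|
        ≤ (Real.pi / Real.sqrt 6) * b * Ns ^ ((3 : ℝ) / s) * N2 ^ (1 - 3 / s) := by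
  subst hNs hN2
  obtain ⟨hsum_weighted, hle⟩ := summable_and_tsum_abs_mul_sq_le_interpolation hs hsum
  have hdom : ∀ ℓ, |c (ℓ + 1) * φ (ℓ + 1) x| ≤ b * (|c (ℓ + 1)| * ((ℓ + 1 : ℕ) : ℝ) ^ 2) :=
    fun ℓ => by
      rw [abs_mul, mul_left_comm]
      exact mul_le_mul_of_nonneg_left (hφ (ℓ + 1) ℓ.succ_pos x) (abs_nonneg _)
  have hsum_abs := (hsum_weighted.mul_left b).of_nonneg_of_le (fun ℓ => abs_nonneg _) hdom
  refine ⟨hsum_abs, ?_⟩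
  calc |∑' ℓ, c (ℓ + 1) * φ (ℓ + 1) x|
      ≤ ∑' ℓ, |c (ℓ + 1) * φ (ℓ + 1) x| := by
        simpa only [Real.norm_eq_abs] using
          norm_tsum_le_tsum_norm (f := fun ℓ => c (ℓ + 1) * φ (ℓ + 1) x)
            (by simpa only [Real.norm_eq_abs] using hsum_abs)
    _ ≤ b * ∑' ℓ, |c (ℓ + 1)| * ((ℓ + 1 : ℕ) : ℝ) ^ 2 := by
        rw [← tsum_mul_left]
        exact hsum_abs.tsum_le_tsum hdom (hsum_weighted.mul_left b)
    _ ≤ _ := by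
        rw [mul_assoc, mul_assoc, mul_left_comm]
        exact mul_le_mul_of_nonneg_left hle hb.le
end

section
/- Let X be a set, b > 0, and let (φ_ℓ)_{ℓ≥1} be real-valued functions on X with |φ_ℓ(x)| ≤ b ℓ² for all x and ℓ. Let s > 0, let (c_ℓ)_{ℓ≥1} satisfy ‖f‖_s² := Σ_{ℓ=1}^∞ c_ℓ² ℓ^{2s} < ∞ and ‖f‖₂² := Σ_{ℓ=1}^∞ c_ℓ², and let p ≥ 1 be such that 2s/p − 4 > 1. Then for every x ∈ X, |Σ_{ℓ=1}^∞ c_ℓ φ_ℓ(x)| ≤ b · ζ(2s/p − 4)^{1/2} · ‖f‖_s^{1/p} · ‖f‖₂^{1−1/p}, where ζ is the Riemann zeta function. -/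
/-!
With `r = 2s/p − 4`, bound `|c_ℓ φ_ℓ(x)| ≤ b |c_ℓ| ℓ² = b · ℓ^{−r/2} · |c_ℓ| ℓ^{s/p}`. Cauchy–Schwarz
gives `ζ(r)^{1/2} (∑ c_ℓ² ℓ^{2s/p})^{1/2}`, and Hölder with exponents `p` and `p/(p−1)` applied to
`c_ℓ² ℓ^{2s/p} = (c_ℓ² ℓ^{2s})^{1/p} (c_ℓ²)^{1−1/p}` interpolates the middle sum between
`‖f‖_s²` and `‖f‖₂²`.
-/
open Real

theorem Real.summable_and_tsum_rpow_mul_rpow_one_sub_le {ι : Type*} {f g : ι → ℝ} {θ : ℝ}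
    (hf : ∀ i, 0 ≤ f i) (hg : ∀ i, 0 ≤ g i) (hf_sum : Summable f) (hg_sum : Summable g)
    (hθ₀ : 0 ≤ θ) (hθ₁ : θ ≤ 1) :
    (Summable fun i => f i ^ θ * g i ^ (1 - θ)) ∧
      ∑' i, f i ^ θ * g i ^ (1 - θ) ≤ (∑' i, f i) ^ θ * (∑' i, g i) ^ (1 - θ) := by
  rcases hθ₀.eq_or_lt with rfl | hθ₀
  · simpa using hg_sum
  rcases hθ₁.eq_or_lt with rfl | hθ₁
  · simpa using hf_sum
  have hθ₁' : 1 - θ ≠ 0 := by linarith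
  simpa [rpow_rpow_inv (hf _) hθ₀.ne', rpow_rpow_inv (hg _) hθ₁'] using
    summable_and_inner_le_Lp_mul_Lq_tsum_of_nonneg (HolderConjugate.inv_one_sub_inv hθ₀ hθ₁)
      (f := fun i => f i ^ θ) (g := fun i => g i ^ (1 - θ))
      (fun i => rpow_nonneg (hf i) _) (fun i => rpow_nonneg (hg i) _)
      (by simpa [rpow_rpow_inv (hf _) hθ₀.ne'] using hf_sum)
      (by simpa [rpow_rpow_inv (hg _) hθ₁'] using hg_sum)

theorem Real.summable_and_tsum_sqrt_mul_le {ι : Type*} {f g : ι → ℝ}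
    (hf : ∀ i, 0 ≤ f i) (hg : ∀ i, 0 ≤ g i) (hf_sum : Summable f) (hg_sum : Summable g) :
    (Summable fun i => √(f i) * √(g i)) ∧
      ∑' i, √(f i) * √(g i) ≤ √(∑' i, f i) * √(∑' i, g i) := by
  simpa only [sqrt_eq_rpow, show (1 : ℝ) - 1 / 2 = 1 / 2 by norm_num] using
    summable_and_tsum_rpow_mul_rpow_one_sub_le hf hg hf_sum hg_sum
      (θ := 1 / 2) (by norm_num) (by norm_num)

theorem Real.mul_rpow_mul_rpow_one_sub {a w : ℝ} (ha : 0 ≤ a) (hw : 0 ≤ w) (θ : ℝ) :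
    (a * w) ^ θ * a ^ (1 - θ) = a * w ^ θ := by
  rw [mul_rpow ha hw, mul_right_comm, ← rpow_add' ha (by norm_num), add_sub_cancel, rpow_one]

theorem Real.sqrt_rpow_eq_rpow_sqrt {x : ℝ} (hx : 0 ≤ x) (y : ℝ) : √(x ^ y) = √x ^ y := by
  rw [sqrt_eq_rpow, ← rpow_mul hx, mul_comm, rpow_mul hx, ← sqrt_eq_rpow]

theorem Real.sqrt_rpow_sub_four_mul_sq_mul_rpow {n : ℝ} (hn : 0 < n) (a t : ℝ) :
    √(n ^ (-(t - 4))) * √(a ^ 2 * n ^ t) = |a| * n ^ 2 := by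
  have h : n ^ (-(t - 4)) * n ^ t = n ^ (4 : ℕ) := by
    rw [← rpow_add hn]; norm_num
  rw [← sqrt_mul (by positivity), mul_left_comm, h, sqrt_mul (sq_nonneg a), sqrt_sq_eq_abs,
    show n ^ 4 = (n ^ 2) ^ 2 by ring, sqrt_sq (by positivity)]

/-- Parametrized interpolation inequality: if `|φ_ℓ(x)| ≤ b ℓ²`,
`‖f‖_s² = ∑_{ℓ≥1} c_ℓ² ℓ^{2s} < ∞`, and `p ≥ 1` with `2s/p − 4 > 1`, then
`|∑_{ℓ≥1} c_ℓ φ_ℓ(x)| ≤ b · ζ(2s/p − 4)^{1/2} · ‖f‖_s^{1/p} · ‖f‖₂^{1−1/p}`,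
where `ζ(r) = ∑_{ℓ≥1} ℓ^{−r}`. -/
theorem interpolation_inequality_with_parameter
    {X : Type*} (b : ℝ) (hb : 0 < b)
    (φ : ℕ → X → ℝ) (c : ℕ → ℝ) (s : ℝ) (hs : 0 < s)
    (hφ : ∀ ℓ : ℕ, 1 ≤ ℓ → ∀ x : X, |φ ℓ x| ≤ b * (ℓ : ℝ) ^ 2)
    (hsum : Summable (fun ℓ : ℕ => (c (ℓ + 1)) ^ 2 * ((ℓ + 1 : ℕ) : ℝ) ^ (2 * s)))
    (p : ℝ) (hp : 1 ≤ p) (hzeta : 1 < 2 * s / p - 4)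
    (Ns N2 : ℝ)
    (hNs : Ns = Real.sqrt (∑' ℓ : ℕ, (c (ℓ + 1)) ^ 2 * ((ℓ + 1 : ℕ) : ℝ) ^ (2 * s)))
    (hN2 : N2 = Real.sqrt (∑' ℓ : ℕ, (c (ℓ + 1)) ^ 2))
    (x : X) :
    |∑' ℓ : ℕ, c (ℓ + 1) * φ (ℓ + 1) x|
      ≤ b * Real.sqrt (∑' ℓ : ℕ, ((ℓ + 1 : ℕ) : ℝ) ^ (-(2 * s / p - 4)))
        * Ns ^ (1 / p) * N2 ^ (1 - 1 / p) := by
  have hn : ∀ ℓ : ℕ, 1 ≤ ((ℓ + 1 : ℕ) : ℝ) := fun ℓ => Nat.one_le_cast.mpr (Nat.le_add_left 1 ℓ)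
  have hn₀ : ∀ ℓ : ℕ, 0 < ((ℓ + 1 : ℕ) : ℝ) := fun ℓ => by positivity
  have hzeta_sum : Summable fun ℓ : ℕ => ((ℓ + 1 : ℕ) : ℝ) ^ (-(2 * s / p - 4)) :=
    (summable_nat_add_iff 1).mpr (summable_nat_rpow.mpr (by linarith))
  have hc_sum : Summable fun ℓ => c (ℓ + 1) ^ 2 :=
    hsum.of_nonneg_of_le (fun _ => sq_nonneg _) fun ℓ =>
      le_mul_of_one_le_right (sq_nonneg _) (one_le_rpow (hn ℓ) (by positivity))
  obtain ⟨hM_sum, hM_le⟩ := summable_and_tsum_rpow_mul_rpow_one_sub_le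
    (fun ℓ => by positivity) (fun ℓ => sq_nonneg _) hsum hc_sum
    (θ := 1 / p) (by positivity) ((div_le_one (by positivity)).mpr hp)
  simp only [mul_rpow_mul_rpow_one_sub (sq_nonneg _) (rpow_nonneg (hn₀ _).le _),
    ← rpow_mul (hn₀ _).le, mul_one_div] at hM_sum hM_le
  obtain ⟨hCS_sum, hCS_le⟩ := summable_and_tsum_sqrt_mul_le
    (fun ℓ => (rpow_pos_of_pos (hn₀ ℓ) _).le) (fun ℓ => by positivity) hzeta_sum hM_sum
  simp only [sqrt_rpow_sub_four_mul_sq_mul_rpow (hn₀ _)] at hCS_sum hCS_le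
  calc |∑' ℓ : ℕ, c (ℓ + 1) * φ (ℓ + 1) x|
      ≤ b * ∑' ℓ : ℕ, |c (ℓ + 1)| * ((ℓ + 1 : ℕ) : ℝ) ^ 2 := by
        rw [← tsum_mul_left]
        refine tsum_of_norm_bounded (f := fun ℓ => c (ℓ + 1) * φ (ℓ + 1) x)
          (hCS_sum.mul_left b).hasSum fun ℓ => ?_
        rw [norm_mul, Real.norm_eq_abs, Real.norm_eq_abs, mul_left_comm]
        exact mul_le_mul_of_nonneg_left (hφ (ℓ + 1) (Nat.le_add_left 1 ℓ) x) (abs_nonneg _)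
    _ ≤ _ := by
        rw [hNs, hN2, mul_assoc, mul_assoc,
          ← sqrt_rpow_eq_rpow_sqrt (tsum_nonneg fun _ => by positivity),
          ← sqrt_rpow_eq_rpow_sqrt (tsum_nonneg fun _ => by positivity),
          ← sqrt_mul (by positivity)]
        gcongr
        exact hCS_le.trans (by gcongr)
end

section
/- Let d ≥ 2 be an integer, ρ > 0, and let (µ_ℓ)_{ℓ≥1} be a sequence of reals with µ_ℓ ≥ exp(−ρ ℓ²) for every ℓ ≥ 1. Set C := exp(−8ρ) and c := 2 d^{2/d} (d−1)^{2(d−1)/d}. Then for every integer ℓ ≥ 1 the set of d-tuples (i_1,…,i_d) of positive integers satisfying µ_{i_1}·µ_{i_2}·…·µ_{i_d} ≥ C · exp(−c ρ (ℓ+d)^{2/d}) has cardinality at least ℓ. (Consequently the ℓ-th largest value among all d-fold products µ_{i_1}⋯µ_{i_d} is at least C exp(−cρ(ℓ+d)^{2/d}).) -/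
set_option maxHeartbeats 1000000 in
/-- If `μ_ℓ ≥ exp(−ρℓ²)` for all `ℓ ≥ 1`, then with `C = exp(−8ρ)` and
`c = 2 d^{2/d} (d−1)^{2(d−1)/d}`, for every `ℓ ≥ 1` there are at least `ℓ` ordered
`d`-tuples of positive integers whose `μ`-product is at least
`C exp(−cρ(ℓ+d)^{2/d})`. -/
theorem product_eigenvalue_count_lower_bound
    (d : ℕ) (hd : 2 ≤ d) (ρ : ℝ) (hρ : 0 < ρ)
    (μ : ℕ → ℝ) (hμ : ∀ ℓ : ℕ, 1 ≤ ℓ → Real.exp (-ρ * (ℓ : ℝ) ^ 2) ≤ μ ℓ)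
    (C c : ℝ)
    (hC : C = Real.exp (-8 * ρ))
    (hc : c = 2 * (d : ℝ) ^ ((2 : ℝ) / (d : ℝ))
        * ((d : ℝ) - 1) ^ (2 * ((d : ℝ) - 1) / (d : ℝ)))
    (ℓ : ℕ) (hℓ : 1 ≤ ℓ) :
    ∃ S : Finset (Fin d → ℕ), ℓ ≤ S.card ∧
      ∀ t ∈ S, (∀ i, 1 ≤ t i) ∧
        C * Real.exp (-(c * ρ * (((ℓ : ℝ) + (d : ℝ)) ^ ((2 : ℝ) / (d : ℝ)))))
          ≤ ∏ i, μ (t i) := by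
  have hd2 : (2:ℝ) ≤ (d:ℝ) := by exact_mod_cast hd
  have hdpos : (0:ℝ) < (d:ℝ) := by linarith
  have hd0 : (d:ℝ) ≠ 0 := ne_of_gt hdpos
  have hd1 : (1:ℝ) ≤ (d:ℝ) - 1 := by linarith
  have hl1 : (1:ℝ) ≤ (ℓ:ℝ) := by exact_mod_cast hℓ
  set X : ℝ := ((ℓ : ℝ) + (d : ℝ)) ^ ((2 : ℝ) / (d : ℝ)) with hX
  -- c ≥ 2 (d-1)^2
  have hcge : 2 * ((d:ℝ) - 1) ^ 2 ≤ c := by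
    have h1 : ((d:ℝ)-1) ^ ((2:ℝ)/d) ≤ (d:ℝ) ^ ((2:ℝ)/d) :=
      Real.rpow_le_rpow (by linarith) (by linarith) (by positivity)
    have h2 : ((d:ℝ)-1) ^ ((2:ℝ)/d) * ((d:ℝ)-1) ^ (2*((d:ℝ)-1)/d) = ((d:ℝ)-1)^2 := by
      rw [← Real.rpow_add (by linarith)]
      rw [show (2:ℝ)/d + 2*((d:ℝ)-1)/d = 2 by field_simp; ring]
      rw [show (2:ℝ) = ((2:ℕ):ℝ) by norm_num, Real.rpow_natCast]
    have hBnn : (0:ℝ) ≤ ((d:ℝ)-1) ^ (2*((d:ℝ)-1)/d) := Real.rpow_nonneg (by linarith) _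
    rw [hc]
    nlinarith [mul_le_mul_of_nonneg_right h1 hBnn]
  have hcnn : (0:ℝ) ≤ c := le_trans (by positivity) hcge
  have hX1 : (1:ℝ) ≤ X := by
    rw [hX]
    calc (1:ℝ) = (1:ℝ) ^ ((2:ℝ)/d) := (Real.one_rpow _).symm
      _ ≤ ((ℓ : ℝ) + (d : ℝ)) ^ ((2 : ℝ) / (d : ℝ)) := by
          apply Real.rpow_le_rpow zero_le_one (by linarith)
            (by positivity)
  -- choose m : smallest with ℓ ≤ m ^ d
  have hex : ∃ k, ℓ ≤ k ^ d := ⟨ℓ, Nat.le_self_pow (by omega) ℓ⟩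
  obtain ⟨m, hm, hmin⟩ : ∃ m : ℕ, ℓ ≤ m ^ d ∧ ∀ k < m, ¬ ℓ ≤ k ^ d :=
    ⟨Nat.find hex, Nat.find_spec hex, fun k hk => Nat.find_min hex hk⟩
  have hm1 : 1 ≤ m := by
    rcases Nat.eq_zero_or_pos m with h0 | h
    · rw [h0, Nat.zero_pow (by omega)] at hm; omega
    · exact h
  -- key arithmetic inequality
  have hkey : (d:ℝ) * (m:ℝ) ^ 2 ≤ 8 + c * X := by
    rcases Nat.lt_or_ge m 2 with hm2 | hm2
    · -- m = 1
      have : m = 1 := by omega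
      rw [this]
      have : 2 * ((d:ℝ)-1)^2 * 1 ≤ c * X :=
        mul_le_mul hcge hX1 zero_le_one hcnn
      push_cast
      nlinarith
    · -- m ≥ 2 : (m-1)^d < ℓ
      have hlt : (m-1) ^ d < ℓ := by
        have := hmin (m-1) (by omega)
        omega
      have hm2R : (2:ℝ) ≤ (m:ℝ) := by exact_mod_cast hm2
      have hcast : ((m-1 : ℕ) : ℝ) = (m:ℝ) - 1 := by
        push_cast [Nat.cast_sub hm1]; ring
      have hltR : ((m:ℝ) - 1) ^ d + 1 ≤ (ℓ:ℝ) := by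
        rw [← hcast]
        exact_mod_cast hlt
      rcases Nat.eq_or_lt_of_le hd with hd2' | hd3
      · -- d = 2
        have hdd : d = 2 := hd2'.symm
        subst hdd
        have hXeq : X = (ℓ:ℝ) + 2 := by
          rw [hX]; norm_num
        have hceq : c = 4 := by
          rw [hc]; norm_num
        rw [hXeq, hceq]
        push_cast
        nlinarith [hltR]
      · -- d ≥ 3
        have hd3R : (3:ℝ) ≤ (d:ℝ) := by exact_mod_cast hd3
        have hXge : ((m:ℝ) - 1) ^ 2 ≤ X := by
          have hmn : (0:ℝ) ≤ (m:ℝ) - 1 := by linarith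
          have h1 : (((m:ℝ) - 1) ^ d) ^ ((2:ℝ)/d) ≤ X := by
            rw [hX]
            apply Real.rpow_le_rpow (by positivity) (by linarith) (by positivity)
          have h2 : (((m:ℝ) - 1) ^ d) ^ ((2:ℝ)/d) = ((m:ℝ) - 1) ^ 2 := by
            rw [← Real.rpow_natCast ((m:ℝ) - 1) d, ← Real.rpow_mul hmn,
              show (d:ℝ) * ((2:ℝ)/d) = 2 by field_simp,
              show (2:ℝ) = ((2:ℕ):ℝ) by norm_num, Real.rpow_natCast]
          linarith [h1, h2.symm.le]
        have hcx : 2 * ((d:ℝ)-1)^2 * (((m:ℝ)-1)^2) ≤ c * X :=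
          mul_le_mul hcge hXge (by positivity) hcnn
        nlinarith [hcx, sq_nonneg ((d:ℝ)-3), sq_nonneg ((m:ℝ)-2),
          mul_nonneg (mul_nonneg (show (0:ℝ) ≤ (d:ℝ)-3 by linarith)
            (show (0:ℝ) ≤ (m:ℝ)-2 by linarith)) (show (0:ℝ) ≤ (m:ℝ)-2 by linarith),
          mul_nonneg (show (0:ℝ) ≤ (d:ℝ)-3 by linarith) (sq_nonneg ((m:ℝ)-1)),
          mul_nonneg (show (0:ℝ) ≤ (d:ℝ)-3 by linarith) (show (0:ℝ) ≤ (m:ℝ)-2 by linarith)]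
  -- the set
  refine ⟨Fintype.piFinset (fun _ : Fin d => Finset.Icc 1 m), ?_, ?_⟩
  · have hcard : (Fintype.piFinset (fun _ : Fin d => Finset.Icc 1 m)).card = m ^ d := by
      simp [Fintype.card_piFinset, Nat.card_Icc]
    rw [hcard]; exact hm
  · intro t ht
    rw [Fintype.mem_piFinset] at ht
    have ht1 : ∀ i, 1 ≤ t i := fun i => (Finset.mem_Icc.mp (ht i)).1
    have htm : ∀ i, t i ≤ m := fun i => (Finset.mem_Icc.mp (ht i)).2
    refine ⟨ht1, ?_⟩
    have hsum : ∑ i : Fin d, (-ρ * ((t i : ℕ) : ℝ) ^ 2) ≥ -ρ * ((d:ℝ) * (m:ℝ)^2) := by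
      have h1 : ∑ i : Fin d, (((t i : ℕ):ℝ) ^ 2) ≤ (d:ℝ) * (m:ℝ)^2 := by
        calc ∑ i : Fin d, (((t i : ℕ):ℝ) ^ 2) ≤ ∑ _i : Fin d, ((m:ℝ)^2) := by
              apply Finset.sum_le_sum
              intro i _
              have : ((t i : ℕ):ℝ) ≤ (m:ℝ) := by exact_mod_cast htm i
              have h0 : (0:ℝ) ≤ ((t i : ℕ):ℝ) := by positivity
              nlinarith
          _ = (d:ℝ) * (m:ℝ)^2 := by
              rw [Finset.sum_const, Finset.card_univ, Fintype.card_fin, nsmul_eq_mul]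
      have : ∑ i : Fin d, (-ρ * ((t i : ℕ) : ℝ) ^ 2) = -ρ * ∑ i : Fin d, (((t i : ℕ):ℝ) ^ 2) := by
        rw [Finset.mul_sum]
      rw [this]
      nlinarith
    calc C * Real.exp (-(c * ρ * X))
        = Real.exp (-8 * ρ + -(c * ρ * X)) := by rw [hC, Real.exp_add]
      _ ≤ Real.exp (∑ i : Fin d, (-ρ * ((t i : ℕ) : ℝ) ^ 2)) := by
          apply Real.exp_le_exp.mpr
          have := mul_le_mul_of_nonneg_left hkey (le_of_lt hρ)
          nlinarith [hsum]
      _ = ∏ i : Fin d, Real.exp (-ρ * ((t i : ℕ) : ℝ) ^ 2) := Real.exp_sum _ _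
      _ ≤ ∏ i : Fin d, μ (t i) := by
          apply Finset.prod_le_prod
          · intro i _; exact (Real.exp_pos _).le
          · intro i _; exact hμ _ (ht1 i)
end

section
/- Fix c > 0. There exist constants C > 0 and A > 0 (depending only on c) such that for every integer n ≥ 2, ∫_{[0,1]^n} exp(−c / M(u)²) du ≥ C · exp(−A (n−1)²), where M(u) := min_{1≤i<j≤n} |u_i − u_j| is the minimal gap of the coordinates of u. Equivalently, for n independent uniforms on [0,1] with minimal gap M, E[exp(−c M^{−2})] ≥ C e^{−A(n−1)²}. -/
/-!
Put the `i`-th coordinate in the interval `[i/n, i/n + 1/(2n)]`. On this box, of volume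
`(2n)^{-n} ≥ e^{-2n²}`, all gaps are at least `1/(2n)`, so the integrand is at least `e^{-4cn²}`.
Since `n ≤ 2(n-1)` for `n ≥ 2`, the product `e^{-(4c+2)n²}` is at least `e^{-4(4c+2)(n-1)²}`.
-/

open MeasureTheory Set Real

noncomputable def minGap {ι : Type*} (u : ι → ℝ) : ℝ :=
  ⨅ p : {p : ι × ι // p.1 ≠ p.2}, |u p.1.1 - u p.1.2|

noncomputable def expNegDivSq (c x : ℝ) : ℝ :=
  if x = 0 then 0 else exp (-c / x ^ 2)

section minGap

variable {ι : Type*}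

theorem measurable_minGap [Countable ι] : Measurable (minGap : (ι → ℝ) → ℝ) :=
  Measurable.iInf fun p => ((measurable_pi_apply p.1.1).sub (measurable_pi_apply p.1.2)).abs

theorem le_minGap [Nontrivial ι] {u : ι → ℝ} {δ : ℝ} (h : ∀ i j, i ≠ j → δ ≤ |u i - u j|) :
    δ ≤ minGap u := by
  obtain ⟨i, j, hij⟩ := exists_pair_ne ι
  have : Nonempty {p : ι × ι // p.1 ≠ p.2} := ⟨⟨(i, j), hij⟩⟩
  exact le_ciInf fun p => h _ _ p.2

theorem le_abs_sub_of_mem_Icc {a b x y δ : ℝ} (hx : x ∈ Icc a (a + δ)) (hy : y ∈ Icc b (b + δ))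
    (hab : 2 * δ ≤ |a - b|) : δ ≤ |x - y| := by
  rw [le_abs] at hab ⊢
  rcases hab with hab | hab
  · left; linarith [hx.1, hx.2, hy.1, hy.2]
  · right; linarith [hx.1, hx.2, hy.1, hy.2]

theorem le_minGap_of_mem_Icc [Nontrivial ι] {a u : ι → ℝ} {δ : ℝ}
    (ha : ∀ i j, i ≠ j → 2 * δ ≤ |a i - a j|) (hu : u ∈ Icc a (a + fun _ => δ)) :
    δ ≤ minGap u :=
  le_minGap fun i j hij =>
    le_abs_sub_of_mem_Icc ⟨hu.1 i, hu.2 i⟩ ⟨hu.1 j, hu.2 j⟩ (ha i j hij)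

end minGap

section expNegDivSq

theorem expNegDivSq_nonneg (c x : ℝ) : 0 ≤ expNegDivSq c x := by
  unfold expNegDivSq; split_ifs <;> positivity

theorem expNegDivSq_le_one {c : ℝ} (hc : 0 ≤ c) (x : ℝ) : expNegDivSq c x ≤ 1 := by
  unfold expNegDivSq
  split_ifs
  · exact zero_le_one
  · exact exp_le_one_iff.2 (div_nonpos_of_nonpos_of_nonneg (neg_nonpos.2 hc) (sq_nonneg x))

theorem measurable_expNegDivSq (c : ℝ) : Measurable (expNegDivSq c) :=
  Measurable.ite (measurableSet_singleton 0) measurable_const (by fun_prop)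

theorem exp_neg_div_sq_le_expNegDivSq {c δ x : ℝ} (hc : 0 ≤ c) (hδ : 0 < δ) (hx : δ ≤ x) :
    exp (-c / δ ^ 2) ≤ expNegDivSq c x := by
  rw [expNegDivSq, if_neg (hδ.trans_le hx).ne', exp_le_exp, neg_div, neg_div, neg_le_neg_iff]
  gcongr

end expNegDivSq

theorem integrableOn_expNegDivSq_minGap {ι : Type*} [Fintype ι] {c : ℝ} (hc : 0 ≤ c)
    {s : Set (ι → ℝ)} (hs : volume s ≠ ⊤) :
    IntegrableOn (fun u => expNegDivSq c (minGap u)) s :=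
  Measure.integrableOn_of_bounded hs
    ((measurable_expNegDivSq c).comp measurable_minGap).aestronglyMeasurable
    (ae_of_all _ fun u => by
      rw [Real.norm_of_nonneg (expNegDivSq_nonneg c _)]; exact expNegDivSq_le_one hc _)

theorem pow_card_mul_exp_le_integral_expNegDivSq_minGap {ι : Type*} [Fintype ι] [Nontrivial ι]
    {c δ : ℝ} (hc : 0 ≤ c) (hδ : 0 < δ) {a : ι → ℝ} (ha : ∀ i j, i ≠ j → 2 * δ ≤ |a i - a j|)
    (hbox : Icc a (a + fun _ => δ) ⊆ Icc 0 1) :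
    δ ^ Fintype.card ι * exp (-c / δ ^ 2)
      ≤ ∫ u in Icc (0 : ι → ℝ) 1, expNegDivSq c (minGap u) := by
  have hfin : volume (Icc (0 : ι → ℝ) 1) ≠ ⊤ := isCompact_Icc.measure_lt_top.ne
  have hboxfin : volume (Icc a (a + fun _ => δ)) ≠ ⊤ := measure_ne_top_of_subset hbox hfin
  have hvol : volume.real (Icc a (a + fun _ => δ)) = δ ^ Fintype.card ι := by
    rw [measureReal_def, volume_Icc_pi_toReal fun _ => by simp [hδ.le]]
    simp
  calc δ ^ Fintype.card ι * exp (-c / δ ^ 2)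
      = exp (-c / δ ^ 2) * volume.real (Icc a (a + fun _ => δ)) := by rw [hvol, mul_comm]
    _ ≤ ∫ u in Icc a (a + fun _ => δ), expNegDivSq c (minGap u) :=
      setIntegral_ge_of_const_le_real measurableSet_Icc hboxfin
        (fun u hu => exp_neg_div_sq_le_expNegDivSq hc hδ (le_minGap_of_mem_Icc ha hu))
        (integrableOn_expNegDivSq_minGap hc hboxfin)
    _ ≤ ∫ u in Icc (0 : ι → ℝ) 1, expNegDivSq c (minGap u) :=
      setIntegral_mono_set (integrableOn_expNegDivSq_minGap hc hfin)
        (ae_of_all _ fun _ => expNegDivSq_nonneg c _) hbox.eventuallyLE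

theorem two_mul_inv_le_abs_div_sub_div {n : ℕ} {i j : Fin n} (hij : i ≠ j) :
    2 * (2 * (n : ℝ))⁻¹ ≤ |(i : ℝ) / n - j / n| := by
  have hn : (0 : ℝ) < n := by exact_mod_cast i.pos
  have hij' : (1 : ℝ) ≤ |(i : ℝ) - j| := by
    have := Int.one_le_abs (sub_ne_zero.2 (Int.ofNat_inj.not.2 (Fin.val_ne_of_ne hij)))
    exact_mod_cast this
  rw [← sub_div, abs_div, abs_of_pos hn, mul_inv, ← mul_assoc, mul_inv_cancel₀ two_ne_zero, one_mul]
  simpa only [one_div] using (div_le_div_iff_of_pos_right hn).2 hij'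

theorem Icc_div_add_inv_two_mul_subset (n : ℕ) :
    Icc (fun i : Fin n => (i : ℝ) / n) ((fun i : Fin n => (i : ℝ) / n) + fun _ => (2 * (n : ℝ))⁻¹)
      ⊆ Icc 0 1 := by
  intro u ⟨hlo, hhi⟩
  refine ⟨fun i => (hlo i).trans' (by positivity), fun i => (hhi i).trans ?_⟩
  have hn : (0 : ℝ) < n := by exact_mod_cast i.pos
  have hi : (i : ℝ) + 1 ≤ n := by exact_mod_cast i.isLt
  simp only [Pi.add_apply, Pi.one_apply]
  have half : (2 * (n : ℝ))⁻¹ * n = 2⁻¹ := by field_simp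
  rw [div_add' _ _ _ hn.ne', div_le_one hn, half]
  linarith

theorem exp_neg_two_mul_sq_le_inv_pow (n : ℕ) : exp (-(2 * n ^ 2)) ≤ (2 * (n : ℝ))⁻¹ ^ n := by
  rcases Nat.eq_zero_or_pos n with rfl | hn
  · simp
  have h : 2 * (n : ℝ) ≤ exp (2 * n) := by linarith [add_one_le_exp (2 * (n : ℝ))]
  calc exp (-(2 * n ^ 2)) = (exp (2 * n) ^ n)⁻¹ := by
        rw [← exp_nat_mul, ← exp_neg]; ring_nf
    _ ≤ (2 * (n : ℝ))⁻¹ ^ n := by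
        rw [inv_pow]; gcongr

/-- Fix `c > 0`. There are constants `C, A > 0` such that for every `n ≥ 2`,
`∫_{[0,1]^n} exp(−c/M(u)²) du ≥ C exp(−A(n−1)²)`, where
`M(u) = min_{i≠j} |u_i − u_j|` is the minimal gap (interpreting the integrand
as `0` when `M(u) = 0`). -/
theorem expected_exp_inverse_square_gap_lower_bound
    (c : ℝ) (hc : 0 < c) :
    ∃ C : ℝ, 0 < C ∧ ∃ A : ℝ, 0 < A ∧ ∀ n : ℕ, 2 ≤ n →
      ∀ M : (Fin n → ℝ) → ℝ,
        (M = fun u => ⨅ p : {p : Fin n × Fin n // p.1 ≠ p.2}, |u p.1.1 - u p.1.2|) →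
        C * Real.exp (-A * ((n : ℝ) - 1) ^ 2)
          ≤ ∫ u in Set.Icc (0 : Fin n → ℝ) 1,
              (if M u = 0 then 0 else Real.exp (-c / (M u) ^ 2)) := by
  refine ⟨1, one_pos, 4 * (4 * c + 2), by positivity, fun n hn M hM => ?_⟩
  subst hM
  have : Nontrivial (Fin n) := Fin.nontrivial_iff_two_le.2 hn
  have hn' : (2 : ℝ) ≤ n := by exact_mod_cast hn
  have hbox := pow_card_mul_exp_le_integral_expNegDivSq_minGap hc.le (by positivity)
    (fun _ _ => two_mul_inv_le_abs_div_sub_div) (Icc_div_add_inv_two_mul_subset n)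
  rw [Fintype.card_fin] at hbox
  refine le_trans ?_ hbox
  calc 1 * exp (-(4 * (4 * c + 2)) * ((n : ℝ) - 1) ^ 2)
      ≤ exp (-(2 * n ^ 2)) * exp (-c / (2 * (n : ℝ))⁻¹ ^ 2) := by
        rw [one_mul, ← exp_add, exp_le_exp, inv_pow, div_inv_eq_mul]
        have hsq : (n : ℝ) ^ 2 ≤ 4 * ((n : ℝ) - 1) ^ 2 := by nlinarith
        nlinarith [mul_le_mul_of_nonneg_left hsq hc.le]
    _ ≤ (2 * (n : ℝ))⁻¹ ^ n * exp (-c / (2 * (n : ℝ))⁻¹ ^ 2) := by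
        gcongr; exact exp_neg_two_mul_sq_le_inv_pow n
end
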